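/- arXiv:1107.2460 — 6 statements merged into one kernel-verified Lean document; each statement's English description precedes it below -/
import Mathlib

section
/- Let n ≥ 2, γ > -1, p > 0, and K > 0 with pK > γ + 1. Then there exists a constant C > 0 such that for every y in the open unit ball of ℝⁿ and every unit vector x' ∈ ℝⁿ, ∫₀¹ (1-r)^γ / |x' - r y|^{pK} dr ≤ C |x' - y|^{γ + 1 - pK}. -/
/-!
For `0 ≤ r ≤ 1` the distance `‖x' - r • y‖` is comparable to `(1 - r) + d`, `d = ‖x' - y‖`
(up to the factor `3`). After the substitution `s = 1 - r` the integral is therefore at most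
`3 ^ q ∫₀^∞ s ^ γ (s + d) ^ (-q) ds` with `q = pK`. Split at `s = d`: on `(0, d]` bound
`(s + d) ^ (-q) ≤ d ^ (-q)`, on `(d, ∞)` bound it by `s ^ (-q)`; both pieces are multiples of
`d ^ (γ + 1 - q)`, the first because `γ > -1`, the second because `q > γ + 1`.
-/

open MeasureTheory Set

theorem one_sub_add_norm_sub_le_three_mul_norm_sub_smul {E : Type*} [SeminormedAddCommGroup E]
    [NormedSpace ℝ E] {x y : E} (hx : 1 ≤ ‖x‖) (hy : ‖y‖ ≤ 1) {r : ℝ} (hr₀ : 0 ≤ r)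
    (hr₁ : r ≤ 1) : 1 - r + ‖x - y‖ ≤ 3 * ‖x - r • y‖ := by
  have hry : ‖r • y‖ ≤ r := by
    rw [norm_smul, Real.norm_of_nonneg hr₀]; exact mul_le_of_le_one_right hr₀ hy
  have hyr : ‖r • y - y‖ ≤ 1 - r := by
    rw [← neg_sub, norm_neg, ← one_smul ℝ y, smul_smul, mul_one, ← sub_smul, norm_smul,
      Real.norm_of_nonneg (by linarith)]
    exact mul_le_of_le_one_right (by linarith) hy
  have h₁ : 1 - r ≤ ‖x - r • y‖ := by linarith [norm_sub_norm_le x (r • y)]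
  have h₂ : ‖x - y‖ ≤ ‖x - r • y‖ + ‖r • y - y‖ := norm_sub_le_norm_sub_add_norm_sub _ _ _
  linarith

theorem setIntegral_Iio_comp_sub_left {E : Type*} [NormedAddCommGroup E] [NormedSpace ℝ E]
    (g : ℝ → E) (a : ℝ) : ∫ x in Iio a, g (a - x) = ∫ x in Ioi 0, g x := by
  simpa using (Measure.measurePreserving_sub_left volume a).setIntegral_preimage_emb
    (measurableEmbedding_subLeft a) g (Ioi 0)

theorem MeasureTheory.IntegrableOn.comp_sub_left_Iio {E : Type*} [NormedAddCommGroup E]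
    {g : ℝ → E} (hg : IntegrableOn g (Ioi 0)) (a : ℝ) :
    IntegrableOn (fun x ↦ g (a - x)) (Iio a) := by
  simpa [Function.comp_def] using
    ((Measure.measurePreserving_sub_left volume a).integrableOn_comp_preimage
      (measurableEmbedding_subLeft a)).2 hg

namespace Real

theorem rpow_neg_le_mul_rpow_neg_of_le_mul {a c t q : ℝ} (ha : 0 < a) (hc : 0 < c)
    (hat : a ≤ c * t) (hq : 0 ≤ q) : t ^ (-q) ≤ c ^ q * a ^ (-q) := by
  have hle : a / c ≤ t := by rwa [div_le_iff₀' hc]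
  calc t ^ (-q) ≤ (a / c) ^ (-q) := rpow_le_rpow_of_nonpos (by positivity) hle (by linarith)
    _ = c ^ q * a ^ (-q) := by
      rw [div_rpow ha.le hc.le, rpow_neg hc.le, div_inv_eq_mul, mul_comm]

variable {γ q d : ℝ}

theorem rpow_mul_add_rpow_neg_le_left (hq : 0 ≤ q) (hd : 0 < d) {s : ℝ} (hs : 0 ≤ s) :
    s ^ γ * (s + d) ^ (-q) ≤ d ^ (-q) * s ^ γ := by
  rw [mul_comm]
  exact mul_le_mul_of_nonneg_right
    (rpow_le_rpow_of_nonpos hd (by linarith) (by linarith)) (rpow_nonneg hs _)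

theorem rpow_mul_add_rpow_neg_le_rpow_sub (hq : 0 ≤ q) (hd : 0 ≤ d) {s : ℝ} (hs : 0 < s) :
    s ^ γ * (s + d) ^ (-q) ≤ s ^ (γ - q) := by
  rw [sub_eq_add_neg, rpow_add hs]
  exact mul_le_mul_of_nonneg_left
    (rpow_le_rpow_of_nonpos hs (by linarith) (by linarith)) (rpow_nonneg hs.le _)

theorem integrableOn_Ioc_rpow_mul_add_rpow_neg (hγ : -1 < γ) (hq : 0 ≤ q) (hd : 0 < d) :
    IntegrableOn (fun s ↦ s ^ γ * (s + d) ^ (-q)) (Ioc 0 d) := by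
  have hdom : IntegrableOn (fun s ↦ d ^ (-q) * s ^ γ) (Ioc 0 d) :=
    ((intervalIntegral.intervalIntegrable_rpow' hγ).const_mul _).1
  refine hdom.mono' (by fun_prop) ((ae_restrict_iff' measurableSet_Ioc).2 ?_)
  filter_upwards with s hs
  rw [norm_of_nonneg (mul_nonneg (rpow_nonneg hs.1.le _) (rpow_nonneg (by linarith [hs.1]) _))]
  exact rpow_mul_add_rpow_neg_le_left hq hd hs.1.le

theorem integrableOn_Ioi_rpow_mul_add_rpow_neg (hγq : γ + 1 < q) (hq : 0 ≤ q) (hd : 0 < d) :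
    IntegrableOn (fun s ↦ s ^ γ * (s + d) ^ (-q)) (Ioi d) := by
  have hdom : IntegrableOn (fun s ↦ s ^ (γ - q)) (Ioi d) :=
    integrableOn_Ioi_rpow_of_lt (by linarith) hd
  refine hdom.mono' (by fun_prop) ((ae_restrict_iff' measurableSet_Ioi).2 ?_)
  filter_upwards with s hs
  have hs₀ : 0 < s := hd.trans hs
  rw [norm_of_nonneg (mul_nonneg (rpow_nonneg hs₀.le _) (rpow_nonneg (by linarith) _))]
  exact rpow_mul_add_rpow_neg_le_rpow_sub hq hd.le hs₀

theorem setIntegral_Ioc_rpow_mul_add_rpow_neg_le (hγ : -1 < γ) (hq : 0 ≤ q) (hd : 0 < d) :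
    ∫ s in Ioc 0 d, s ^ γ * (s + d) ^ (-q) ≤ d ^ (γ + 1 - q) / (γ + 1) := by
  calc ∫ s in Ioc 0 d, s ^ γ * (s + d) ^ (-q)
      ≤ ∫ s in Ioc 0 d, d ^ (-q) * s ^ γ :=
        setIntegral_mono_on (integrableOn_Ioc_rpow_mul_add_rpow_neg hγ hq hd)
          ((intervalIntegral.intervalIntegrable_rpow' hγ).const_mul _).1 measurableSet_Ioc
          fun s hs ↦ rpow_mul_add_rpow_neg_le_left hq hd hs.1.le
    _ = d ^ (γ + 1 - q) / (γ + 1) := by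
      rw [← intervalIntegral.integral_of_le hd.le, intervalIntegral.integral_const_mul,
        integral_rpow (.inl hγ), zero_rpow (by linarith), sub_zero, ← mul_div_assoc,
        ← rpow_add hd, neg_add_eq_sub]

theorem setIntegral_Ioi_rpow_mul_add_rpow_neg_le (hγq : γ + 1 < q) (hq : 0 ≤ q) (hd : 0 < d) :
    ∫ s in Ioi d, s ^ γ * (s + d) ^ (-q) ≤ d ^ (γ + 1 - q) / (q - (γ + 1)) := by
  calc ∫ s in Ioi d, s ^ γ * (s + d) ^ (-q)
      ≤ ∫ s in Ioi d, s ^ (γ - q) :=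
        setIntegral_mono_on (integrableOn_Ioi_rpow_mul_add_rpow_neg hγq hq hd)
          (integrableOn_Ioi_rpow_of_lt (by linarith) hd) measurableSet_Ioi
          fun s hs ↦ rpow_mul_add_rpow_neg_le_rpow_sub hq hd.le (hd.trans hs)
    _ = d ^ (γ + 1 - q) / (q - (γ + 1)) := by
      rw [integral_Ioi_rpow_of_lt (by linarith) hd, ← neg_div_neg_eq, neg_neg]
      ring_nf

theorem integrableOn_Ioi_zero_rpow_mul_add_rpow_neg (hγ : -1 < γ) (hγq : γ + 1 < q)
    (hd : 0 < d) : IntegrableOn (fun s ↦ s ^ γ * (s + d) ^ (-q)) (Ioi 0) := by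
  have hq : 0 ≤ q := by linarith
  rw [← Ioc_union_Ioi_eq_Ioi hd.le]
  exact (integrableOn_Ioc_rpow_mul_add_rpow_neg hγ hq hd).union
    (integrableOn_Ioi_rpow_mul_add_rpow_neg hγq hq hd)

theorem setIntegral_Ioi_zero_rpow_mul_add_rpow_neg_le (hγ : -1 < γ) (hγq : γ + 1 < q)
    (hd : 0 < d) : ∫ s in Ioi 0, s ^ γ * (s + d) ^ (-q)
      ≤ (1 / (γ + 1) + 1 / (q - (γ + 1))) * d ^ (γ + 1 - q) := by
  have hq : 0 ≤ q := by linarith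
  rw [← Ioc_union_Ioi_eq_Ioi hd.le, setIntegral_union Ioc_disjoint_Ioi_same measurableSet_Ioi
    (integrableOn_Ioc_rpow_mul_add_rpow_neg hγ hq hd)
    (integrableOn_Ioi_rpow_mul_add_rpow_neg hγq hq hd)]
  calc _ ≤ d ^ (γ + 1 - q) / (γ + 1) + d ^ (γ + 1 - q) / (q - (γ + 1)) :=
        add_le_add (setIntegral_Ioc_rpow_mul_add_rpow_neg_le hγ hq hd)
          (setIntegral_Ioi_rpow_mul_add_rpow_neg_le hγq hq hd)
    _ = _ := by ring

end Real

theorem one_sub_rpow_div_norm_sub_smul_rpow_le {E : Type*} [SeminormedAddCommGroup E]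
    [NormedSpace ℝ E] {x y : E} (hx : 1 ≤ ‖x‖) (hy : ‖y‖ ≤ 1) {r γ q : ℝ} (hr₀ : 0 ≤ r)
    (hr₁ : r < 1) (hq : 0 ≤ q) :
    (1 - r) ^ γ / ‖x - r • y‖ ^ q ≤ 3 ^ q * ((1 - r) ^ γ * (1 - r + ‖x - y‖) ^ (-q)) := by
  have hgeom := one_sub_add_norm_sub_le_three_mul_norm_sub_smul hx hy hr₀ hr₁.le
  rw [div_eq_mul_inv, ← Real.rpow_neg (norm_nonneg _), mul_left_comm]
  exact mul_le_mul_of_nonneg_left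
    (Real.rpow_neg_le_mul_rpow_neg_of_le_mul (by positivity) three_pos hgeom hq)
    (Real.rpow_nonneg (by linarith) _)

theorem setIntegral_Ioo_comp_one_sub_le {g : ℝ → ℝ} (hg : IntegrableOn g (Ioi 0))
    (hg₀ : ∀ s ∈ Ioi (0 : ℝ), 0 ≤ g s) :
    ∫ r in Ioo (0 : ℝ) 1, g (1 - r) ≤ ∫ s in Ioi 0, g s := by
  rw [← setIntegral_Iio_comp_sub_left g 1]
  refine setIntegral_mono_set (hg.comp_sub_left_Iio 1) ?_ Ioo_subset_Iio_self.eventuallyLE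
  filter_upwards [ae_restrict_mem measurableSet_Iio] with r hr
  exact hg₀ _ (mem_Ioi.2 (sub_pos.2 hr))

theorem stmt2_general (n : ℕ) (γ p K : ℝ) (hγ : -1 < γ)
    (hpK : γ + 1 < p * K) :
    ∃ C : ℝ, 0 < C ∧ ∀ y : EuclideanSpace ℝ (Fin n), ‖y‖ < 1 →
      ∀ x' : EuclideanSpace ℝ (Fin n), ‖x'‖ = 1 →
        ∫ r in Ioo (0:ℝ) 1, (1 - r) ^ γ / ‖x' - r • y‖ ^ (p * K)
          ≤ C * ‖x' - y‖ ^ (γ + 1 - p * K) := by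
  set q := p * K
  have hq : 0 ≤ q := by linarith
  refine ⟨3 ^ q * (1 / (γ + 1) + 1 / (q - (γ + 1))), mul_pos (by positivity)
    (add_pos (one_div_pos.2 (by linarith)) (one_div_pos.2 (by linarith))), ?_⟩
  intro y hy x' hx'
  set d := ‖x' - y‖
  have hd : 0 < d := (by linarith : 0 < ‖x'‖ - ‖y‖).trans_le (norm_sub_norm_le x' y)
  set g : ℝ → ℝ := fun s ↦ s ^ γ * (s + d) ^ (-q)
  have hg : IntegrableOn g (Ioi 0) := Real.integrableOn_Ioi_zero_rpow_mul_add_rpow_neg hγ hpK hd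
  have hg₀ : ∀ s ∈ Ioi (0 : ℝ), 0 ≤ g s := fun s hs ↦
    mul_nonneg (Real.rpow_nonneg (le_of_lt hs) _) (Real.rpow_nonneg (by linarith [hs.out]) _)
  calc ∫ r in Ioo (0:ℝ) 1, (1 - r) ^ γ / ‖x' - r • y‖ ^ q
      ≤ ∫ r in Ioo (0:ℝ) 1, 3 ^ q * g (1 - r) := by
        refine integral_mono_of_nonneg ?_ (((hg.comp_sub_left_Iio 1).mono_set
          Ioo_subset_Iio_self).const_mul _) ((ae_restrict_iff' measurableSet_Ioo).2 ?_)
        · filter_upwards [ae_restrict_mem measurableSet_Ioo] with r hr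
          exact div_nonneg (Real.rpow_nonneg (by linarith [hr.2]) _)
            (Real.rpow_nonneg (norm_nonneg _) _)
        · exact ae_of_all _ fun r hr ↦
            one_sub_rpow_div_norm_sub_smul_rpow_le hx'.ge hy.le hr.1.le hr.2 hq
    _ ≤ 3 ^ q * ∫ s in Ioi (0:ℝ), g s := by
        rw [integral_const_mul]
        exact mul_le_mul_of_nonneg_left (setIntegral_Ioo_comp_one_sub_le hg hg₀) (by positivity)
    _ ≤ 3 ^ q * (1 / (γ + 1) + 1 / (q - (γ + 1))) * d ^ (γ + 1 - q) := by
        rw [mul_assoc]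
        exact mul_le_mul_of_nonneg_left
          (Real.setIntegral_Ioi_zero_rpow_mul_add_rpow_neg_le hγ hpK hd) (by positivity)

theorem stmt2 (n : ℕ) (hn : 2 ≤ n) (γ p K : ℝ) (hγ : -1 < γ) (hp : 0 < p) (hK : 0 < K)
    (hpK : γ + 1 < p * K) :
    ∃ C : ℝ, 0 < C ∧ ∀ y : EuclideanSpace ℝ (Fin n), ‖y‖ < 1 →
      ∀ x' : EuclideanSpace ℝ (Fin n), ‖x'‖ = 1 →
        ∫ r in Ioo (0:ℝ) 1, (1 - r) ^ γ / ‖x' - r • y‖ ^ (p * K)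
          ≤ C * ‖x' - y‖ ^ (γ + 1 - p * K) :=
  stmt2_general n γ p K hγ hpK
end

section
/- Let n ≥ 2 and m > n - 1. Then there exists a constant C > 0 such that for every r ∈ [0,1) and every unit vector y' ∈ ℝⁿ, ∫_{S^{n-1}} |r x' - y'|^{-m} dσ(x') ≤ C (1-r)^{-(m-n+1)}, where σ is the surface measure on the unit sphere S^{n-1} ⊂ ℝⁿ. -/
/-!
For unit vectors `x, y` and `0 ≤ r ≤ 1` one has `‖r • x - y‖ ≥ max (1 - r) (‖x - y‖ / 2)`.
Splitting the sphere into the dyadic shells `‖x - y‖ ≈ 2 ^ k (1 - r)` and using that a spherical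
cap of radius `t` has `(n - 1)`-dimensional Hausdorff measure `O(t ^ (n - 1))`, the integral is
dominated by the geometric series `∑ₖ (2 ^ k (1 - r)) ^ (n - 1 - m)`, which converges because
`m > n - 1`. For `t ≤ 1 / 2` the cap is the image of a `t`-ball of the hyperplane `(ℝ ∙ y)ᗮ`
under the `2`-Lipschitz graph map `v ↦ v + √(1 - ‖v‖²) • y`; for larger `t` it suffices that
the sphere, being covered by finitely many small caps, has finite measure.
-/

open MeasureTheory Set Metric Module
open scoped RealInnerProductSpace

theorem exists_le_two_pow_mul_and_rpow_neg_le {a s m : ℝ} (ha : 0 < a) (hs : a ≤ s) (hm : 0 ≤ m) :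
    ∃ k : ℕ, s ≤ 2 ^ k * a ∧ s ^ (-m) ≤ 2 ^ m * (2 ^ k * a) ^ (-m) := by
  obtain ⟨j, hj_le, hj_lt⟩ := exists_nat_pow_near ((one_le_div ha).2 hs) one_lt_two
  refine ⟨j + 1, ((div_lt_iff₀ ha).1 hj_lt).le, ?_⟩
  have hlow : 2 ^ (j + 1) * a / 2 ≤ s := by
    rw [pow_succ]; linarith [(le_div_iff₀ ha).1 hj_le]
  calc s ^ (-m) ≤ (2 ^ (j + 1) * a / 2) ^ (-m) :=
        Real.rpow_le_rpow_of_nonpos (by positivity) hlow (by linarith)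
    _ = 2 ^ m * (2 ^ (j + 1) * a) ^ (-m) := by
        rw [Real.div_rpow (by positivity) zero_le_two, Real.rpow_neg zero_le_two, div_inv_eq_mul,
          mul_comm]

theorem lintegral_rpow_neg_max_le {X : Type*} [MeasurableSpace X] {μ : Measure X} {d : X → ℝ}
    {a A p m : ℝ} (ha : 0 < a) (hA : 0 ≤ A) (hm : 0 ≤ m) (hpm : p < m) (hd : Measurable d)
    (hμ : ∀ t, 0 < t → μ {x | d x ≤ t} ≤ ENNReal.ofReal (A * t ^ p)) :
    ∫⁻ x, ENNReal.ofReal (max a (d x) ^ (-m)) ∂μ ≤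
      ENNReal.ofReal (2 ^ m * A / (1 - 2 ^ (p - m)) * a ^ (p - m)) := by
  set q : ℝ := 2 ^ (p - m)
  have hq1 : q < 1 := Real.rpow_lt_one_of_one_lt_of_neg one_lt_two (by linarith)
  set ρ : ℕ → ℝ := fun k => 2 ^ k * a
  have hρ : ∀ k, 0 < ρ k := fun k => by positivity
  have hmeas : ∀ k, MeasurableSet {x | d x ≤ ρ k} := fun k => measurableSet_le hd measurable_const
  set K : ℝ := 2 ^ m * A * a ^ (p - m)
  have hterm : ∀ k, 2 ^ m * ρ k ^ (-m) * (A * ρ k ^ p) = K * q ^ k := fun k => by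
    have hpow : ∀ x : ℝ, ((2 : ℝ) ^ k) ^ x = (2 ^ x) ^ k := fun x => by
      rw [← Real.rpow_natCast, ← Real.rpow_mul zero_le_two, mul_comm, Real.rpow_mul zero_le_two,
        Real.rpow_natCast]
    simp only [ρ, K, q]
    rw [Real.mul_rpow (by positivity) ha.le, Real.mul_rpow (by positivity) ha.le, hpow, hpow,
      sub_eq_add_neg, Real.rpow_add ha, Real.rpow_add two_pos, mul_pow]
    ring
  have hdom : ∀ x, ENNReal.ofReal (max a (d x) ^ (-m)) ≤
      ∑' k, {x | d x ≤ ρ k}.indicator (fun _ => ENNReal.ofReal (2 ^ m * ρ k ^ (-m))) x := by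
    intro x
    obtain ⟨k, hk_le, hk⟩ := exists_le_two_pow_mul_and_rpow_neg_le ha (le_max_left a (d x)) hm
    refine le_trans ?_ (ENNReal.le_tsum k)
    rw [indicator_of_mem (s := {x | d x ≤ ρ k}) ((le_max_right a (d x)).trans hk_le)]
    exact ENNReal.ofReal_le_ofReal hk
  have hsum : HasSum (fun k => K * q ^ k) (K * (1 - q)⁻¹) :=
    (hasSum_geometric_of_lt_one (by positivity) hq1).mul_left K
  calc ∫⁻ x, ENNReal.ofReal (max a (d x) ^ (-m)) ∂μ
      ≤ ∫⁻ x, ∑' k, {x | d x ≤ ρ k}.indicator (fun _ => ENNReal.ofReal (2 ^ m * ρ k ^ (-m))) x ∂μ :=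
        lintegral_mono hdom
    _ = ∑' k, ENNReal.ofReal (2 ^ m * ρ k ^ (-m)) * μ {x | d x ≤ ρ k} := by
        rw [lintegral_tsum fun k => (measurable_const.indicator (hmeas k)).aemeasurable]
        exact tsum_congr fun k => lintegral_indicator_const (hmeas k) _
    _ ≤ ∑' k, ENNReal.ofReal (K * q ^ k) := ENNReal.tsum_le_tsum fun k => by
        rw [← hterm, ENNReal.ofReal_mul (p := 2 ^ m * ρ k ^ (-m)) (by positivity)]
        gcongr
        exact hμ _ (hρ k)
    _ = ENNReal.ofReal (2 ^ m * A / (1 - q) * a ^ (p - m)) := by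
        rw [← ENNReal.ofReal_tsum_of_nonneg (fun k => by positivity) hsum.summable, hsum.tsum_eq]
        congr 1
        ring

theorem norm_integral_le_of_le_rpow_neg_max {X : Type*} [MeasurableSpace X] {μ : Measure X}
    {f d : X → ℝ} {a A p m : ℝ} (ha : 0 < a) (hA : 0 ≤ A) (hm : 0 ≤ m) (hpm : p < m)
    (hd : Measurable d) (hμ : ∀ t, 0 < t → μ {x | d x ≤ t} ≤ ENNReal.ofReal (A * t ^ p))
    (hf : ∀ᵐ x ∂μ, ‖f x‖ ≤ max a (d x) ^ (-m)) :
    ‖∫ x, f x ∂μ‖ ≤ 2 ^ m * A / (1 - 2 ^ (p - m)) * a ^ (p - m) := by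
  have hq1 : (2 : ℝ) ^ (p - m) < 1 := Real.rpow_lt_one_of_one_lt_of_neg one_lt_two (by linarith)
  calc ‖∫ x, f x ∂μ‖ ≤ (∫⁻ x, ENNReal.ofReal ‖f x‖ ∂μ).toReal := norm_integral_le_lintegral_norm f
    _ ≤ (ENNReal.ofReal (2 ^ m * A / (1 - 2 ^ (p - m)) * a ^ (p - m))).toReal :=
        ENNReal.toReal_mono ENNReal.ofReal_ne_top <|
          (lintegral_mono_ae (hf.mono fun _ hx => ENNReal.ofReal_le_ofReal hx)).trans
            (lintegral_rpow_neg_max_le ha hA hm hpm hd hμ)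
    _ = 2 ^ m * A / (1 - 2 ^ (p - m)) * a ^ (p - m) :=
        ENNReal.toReal_ofReal (by have := sub_pos.2 hq1; positivity)

theorem abs_sqrt_one_sub_sq_sub_le {s u : ℝ} (hs0 : 0 ≤ s) (hs : s ≤ 1 / 2) (hu0 : 0 ≤ u)
    (hu : u ≤ 1 / 2) : |√(1 - s ^ 2) - √(1 - u ^ 2)| ≤ |s - u| := by
  have hsq : ∀ w : ℝ, 0 ≤ w → w ≤ 1 / 2 → √(1 - w ^ 2) ^ 2 = 1 - w ^ 2 ∧ 1 / 2 ≤ √(1 - w ^ 2) :=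
    fun w hw0 hw => ⟨Real.sq_sqrt (by nlinarith),
      Real.le_sqrt_of_sq_le (by nlinarith)⟩
  obtain ⟨hA2, hA⟩ := hsq s hs0 hs
  obtain ⟨hB2, hB⟩ := hsq u hu0 hu
  have key :
      |√(1 - s ^ 2) - √(1 - u ^ 2)| * (√(1 - s ^ 2) + √(1 - u ^ 2)) = |u - s| * (s + u) := by
    rw [← abs_of_nonneg (by linarith : 0 ≤ √(1 - s ^ 2) + √(1 - u ^ 2)),
      ← abs_of_nonneg (by linarith : 0 ≤ s + u), ← abs_mul, ← abs_mul]
    congr 1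
    linear_combination hA2 - hB2
  rw [abs_sub_comm u s] at key
  nlinarith [abs_nonneg (√(1 - s ^ 2) - √(1 - u ^ 2)), abs_nonneg (s - u)]

section Sphere

variable {E : Type*} [NormedAddCommGroup E] [InnerProductSpace ℝ E]

theorem max_one_sub_le_norm_smul_sub {x y : E} (hx : ‖x‖ = 1) (hy : ‖y‖ = 1) {r : ℝ}
    (hr0 : 0 ≤ r) (hr1 : r ≤ 1) : max (1 - r) (‖x - y‖ / 2) ≤ ‖r • x - y‖ := by
  have hexpand : ‖r • x - y‖ ^ 2 = (1 - r) ^ 2 + r * ‖x - y‖ ^ 2 := by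
    rw [norm_sub_sq_real, norm_sub_sq_real, real_inner_smul_left, norm_smul, hx, hy,
      Real.norm_of_nonneg hr0]
    ring
  have hxy : ‖x - y‖ ≤ 2 := (norm_sub_le x y).trans (by rw [hx, hy]; norm_num)
  refine max_le ((sq_le_sq₀ (by linarith) (norm_nonneg _)).1 ?_)
    ((sq_le_sq₀ (by positivity) (norm_nonneg _)).1 ?_) <;> rw [hexpand]
  · nlinarith [norm_nonneg (x - y)]
  · have hD : ‖x - y‖ ^ 2 ≤ 4 := by nlinarith [norm_nonneg (x - y)]
    -- with `s = ‖x - y‖² / 4 ∈ [0, 1]` the difference is `(1 - s)(1 - r)² + s (r² + 2r)`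
    nlinarith [mul_nonneg (sub_nonneg.2 hD) (sq_nonneg (1 - r)),
      mul_nonneg (sq_nonneg ‖x - y‖) (by positivity : 0 ≤ r ^ 2 + 2 * r)]

theorem lipschitzOnWith_add_sqrt_one_sub_sq_smul {y : E} (hy : ‖y‖ ≤ 1) :
    LipschitzOnWith 2 (fun v : E => v + √(1 - ‖v‖ ^ 2) • y) (closedBall 0 (1 / 2)) := by
  refine LipschitzOnWith.of_dist_le_mul fun v hv w hw => ?_
  rw [mem_closedBall_zero_iff] at hv hw
  have hsqrt : |√(1 - ‖v‖ ^ 2) - √(1 - ‖w‖ ^ 2)| ≤ ‖v - w‖ :=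
    (abs_sqrt_one_sub_sq_sub_le (norm_nonneg v) hv (norm_nonneg w) hw).trans
      (abs_norm_sub_norm_le v w)
  rw [dist_eq_norm, dist_eq_norm]
  calc ‖v + √(1 - ‖v‖ ^ 2) • y - (w + √(1 - ‖w‖ ^ 2) • y)‖
      = ‖(v - w) + (√(1 - ‖v‖ ^ 2) - √(1 - ‖w‖ ^ 2)) • y‖ := by congr 1; module
    _ ≤ ‖v - w‖ + |√(1 - ‖v‖ ^ 2) - √(1 - ‖w‖ ^ 2)| * ‖y‖ := by
        grw [norm_add_le, norm_smul, Real.norm_eq_abs]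
    _ ≤ ‖v - w‖ + ‖v - w‖ * 1 := by gcongr
    _ = 2 * ‖v - w‖ := by ring

theorem sphere_inter_closedBall_subset_image {y : E} (hy : ‖y‖ = 1) {t : ℝ} (ht : t ≤ 1 / 2) :
    sphere 0 1 ∩ closedBall y t ⊆
      (fun v : E => v + √(1 - ‖v‖ ^ 2) • y) '' ((ℝ ∙ y)ᗮ ∩ closedBall 0 t) := by
  rintro x ⟨hx, hxy⟩
  rw [mem_sphere_zero_iff_norm] at hx
  rw [mem_closedBall_iff_norm] at hxy
  set c := ⟪x, y⟫
  have hc : ‖x - y‖ ^ 2 = 2 - 2 * c := by rw [norm_sub_sq_real, hx, hy]; ring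
  have hc0 : 0 ≤ c := by nlinarith [norm_nonneg (x - y)]
  have hv : ‖x - c • y‖ ^ 2 = 1 - c ^ 2 := by
    rw [norm_sub_sq_real, real_inner_smul_right, norm_smul, hx, hy, Real.norm_of_nonneg hc0]
    ring
  refine ⟨x - c • y, ⟨?_, ?_⟩, ?_⟩
  · rw [SetLike.mem_coe, Submodule.mem_orthogonal_singleton_iff_inner_right, inner_sub_right,
      real_inner_smul_right, real_inner_self_eq_norm_sq, hy, real_inner_comm]
    ring
  · rw [mem_closedBall_zero_iff]
    refine le_trans ?_ hxy
    exact (sq_le_sq₀ (norm_nonneg _) (norm_nonneg _)).1 (by nlinarith)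
  · simp only [hv, sub_sub_cancel, Real.sqrt_sq hc0, sub_add_cancel]

theorem hausdorffMeasure_closedBall_eq {V : Type*} [NormedAddCommGroup V] [InnerProductSpace ℝ V]
    [FiniteDimensional ℝ V] [MeasurableSpace V] [BorelSpace V] {k : ℕ} (hV : finrank ℝ V = k)
    {t : ℝ} (ht : 0 ≤ t) :
    μH[k] (closedBall (0 : V) t) =
      ENNReal.ofReal (t ^ k) * μH[k] (ball (0 : EuclideanSpace ℝ (Fin k)) 1) := by
  subst hV
  let e := (stdOrthonormalBasis ℝ V).repr
  rw [← e.toIsometryEquiv.hausdorffMeasure_image, e.toIsometryEquiv.image_closedBall,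
    LinearIsometryEquiv.coe_toIsometryEquiv, map_zero, Measure.addHaar_closedBall _ _ ht,
    finrank_euclideanSpace_fin]

variable [MeasurableSpace E] [BorelSpace E]

theorem hausdorffMeasure_sphere_inter_closedBall_le {k : ℕ} (hE : finrank ℝ E = k + 1) {y : E}
    (hy : ‖y‖ = 1) {t : ℝ} (ht0 : 0 ≤ t) (ht : t ≤ 1 / 2) :
    μH[k] (sphere (0 : E) 1 ∩ closedBall y t) ≤
      2 ^ k * ENNReal.ofReal (t ^ k) * μH[k] (ball (0 : EuclideanSpace ℝ (Fin k)) 1) := by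
  have : Fact (finrank ℝ E = k + 1) := ⟨hE⟩
  have : FiniteDimensional ℝ E := .of_fact_finrank_eq_succ k
  have hy0 : y ≠ 0 := norm_ne_zero_iff.1 (by rw [hy]; exact one_ne_zero)
  have hslice :
      ((ℝ ∙ y)ᗮ : Set E) ∩ closedBall 0 t = Subtype.val '' closedBall (0 : (ℝ ∙ y)ᗮ) t := by
    rw [Subtype.image_closedBall, inter_comm]; rfl
  calc μH[k] (sphere (0 : E) 1 ∩ closedBall y t)
      ≤ μH[k] ((fun v : E => v + √(1 - ‖v‖ ^ 2) • y) '' ((ℝ ∙ y)ᗮ ∩ closedBall 0 t)) :=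
        measure_mono (sphere_inter_closedBall_subset_image hy ht)
    _ ≤ (2 : NNReal) ^ (k : ℝ) * μH[k] (((ℝ ∙ y)ᗮ : Set E) ∩ closedBall 0 t) :=
        ((lipschitzOnWith_add_sqrt_one_sub_sq_smul hy.le).mono
          (inter_subset_right.trans (closedBall_subset_closedBall ht))).hausdorffMeasure_image_le
          k.cast_nonneg
    _ = 2 ^ k * ENNReal.ofReal (t ^ k) * μH[k] (ball (0 : EuclideanSpace ℝ (Fin k)) 1) := by
        rw [hslice, isometry_subtype_coe.hausdorffMeasure_image (Or.inl k.cast_nonneg),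
          hausdorffMeasure_closedBall_eq (Submodule.finrank_orthogonal_span_singleton hy0) ht0,
          mul_assoc]
        norm_cast

theorem hausdorffMeasure_sphere_ne_top {k : ℕ} (hE : finrank ℝ E = k + 1) :
    μH[k] (sphere (0 : E) 1) ≠ ⊤ := by
  have : Fact (finrank ℝ E = k + 1) := ⟨hE⟩
  have : FiniteDimensional ℝ E := .of_fact_finrank_eq_succ k
  obtain ⟨T, hTS, hT, hcover⟩ := finite_cover_balls_of_compact (isCompact_sphere (0 : E) 1)
    (by norm_num : (0 : ℝ) < 1 / 2)
  refine (lt_of_le_of_lt (measure_mono (t := ⋃ y ∈ T, sphere 0 1 ∩ closedBall y (1 / 2))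
    fun x hx => ?_) (measure_biUnion_lt_top hT fun y hy => ?_)).ne
  · obtain ⟨y, hyT, hxy⟩ := mem_iUnion₂.1 (hcover hx)
    exact mem_iUnion₂.2 ⟨y, hyT, hx, ball_subset_closedBall hxy⟩
  · refine (hausdorffMeasure_sphere_inter_closedBall_le hE (mem_sphere_zero_iff_norm.1 (hTS hy))
      (by norm_num) le_rfl).trans_lt ?_
    exact ENNReal.mul_lt_top (by finiteness) measure_ball_lt_top

theorem exists_hausdorffMeasure_sphere_inter_closedBall_le {k : ℕ} (hE : finrank ℝ E = k + 1) :
    ∃ A : ℝ, 0 < A ∧ ∀ y : E, ‖y‖ = 1 → ∀ t : ℝ, 0 ≤ t →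
      μH[k] (sphere (0 : E) 1 ∩ closedBall y t) ≤ ENNReal.ofReal (A * t ^ k) := by
  set B : ENNReal := 2 ^ k * μH[k] (ball (0 : EuclideanSpace ℝ (Fin k)) 1) +
    2 ^ k * μH[k] (sphere (0 : E) 1)
  have hB : B ≠ ⊤ := by
    simp [B, ENNReal.mul_eq_top, measure_ball_lt_top.ne, hausdorffMeasure_sphere_ne_top hE]
  refine ⟨B.toReal + 1, by positivity, fun y hy t ht => ?_⟩
  suffices μH[k] (sphere (0 : E) 1 ∩ closedBall y t) ≤ B * ENNReal.ofReal (t ^ k) by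
    refine this.trans ?_
    rw [ENNReal.ofReal_mul (by positivity)]
    gcongr
    calc B = ENNReal.ofReal B.toReal := (ENNReal.ofReal_toReal hB).symm
      _ ≤ ENNReal.ofReal (B.toReal + 1) := ENNReal.ofReal_le_ofReal (by linarith)
  rcases le_or_gt t (1 / 2) with hsmall | hlarge
  · calc μH[k] (sphere (0 : E) 1 ∩ closedBall y t)
        ≤ 2 ^ k * ENNReal.ofReal (t ^ k) * μH[k] (ball (0 : EuclideanSpace ℝ (Fin k)) 1) :=
          hausdorffMeasure_sphere_inter_closedBall_le hE hy ht hsmall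
      _ ≤ B * ENNReal.ofReal (t ^ k) := by
          rw [mul_right_comm]; gcongr; exact le_self_add
  · calc μH[k] (sphere (0 : E) 1 ∩ closedBall y t)
        ≤ μH[k] (sphere (0 : E) 1) * ENNReal.ofReal ((2 * t) ^ k) := by
          refine (measure_mono inter_subset_left).trans (le_mul_of_one_le_right' ?_)
          exact ENNReal.one_le_ofReal.2 (one_le_pow₀ (by linarith))
      _ ≤ B * ENNReal.ofReal (t ^ k) := by
          rw [mul_pow, ENNReal.ofReal_mul (by positivity), ENNReal.ofReal_pow zero_le_two,
            ENNReal.ofReal_ofNat, ← mul_assoc, mul_comm (μH[k] _)]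
          gcongr
          exact le_add_self

end Sphere

theorem stmt3 (n : ℕ) (hn : 2 ≤ n) (m : ℝ) (hm : (n : ℝ) - 1 < m) :
    ∃ C : ℝ, 0 < C ∧ ∀ r : ℝ, 0 ≤ r → r < 1 → ∀ y' : EuclideanSpace ℝ (Fin n), ‖y'‖ = 1 →
      ∫ x' in Metric.sphere (0 : EuclideanSpace ℝ (Fin n)) 1, ‖r • x' - y'‖ ^ (-m) ∂μH[(n : ℝ) - 1]
        ≤ C * (1 - r) ^ (-(m - (n : ℝ) + 1)) := by
  obtain ⟨k, rfl⟩ : ∃ k, n = k + 1 := ⟨n - 1, by omega⟩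
  have hdim : ((k + 1 : ℕ) : ℝ) - 1 = k := by push_cast; ring
  have hexp : -(m - ((k + 1 : ℕ) : ℝ) + 1) = k - m := by push_cast; ring
  rw [hdim] at hm ⊢
  rw [hexp]
  obtain ⟨A, hA, hcap⟩ := exists_hausdorffMeasure_sphere_inter_closedBall_le
    (E := EuclideanSpace ℝ (Fin (k + 1))) finrank_euclideanSpace_fin
  have hq : (2 : ℝ) ^ ((k : ℝ) - m) < 1 :=
    Real.rpow_lt_one_of_one_lt_of_neg one_lt_two (by linarith)
  refine ⟨2 ^ m * (2 ^ k * A) / (1 - 2 ^ ((k : ℝ) - m)), div_pos (by positivity) (sub_pos.2 hq),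
    fun r hr0 hr1 y hy => (Real.le_norm_self _).trans ?_⟩
  have hS : MeasurableSet (sphere (0 : EuclideanSpace ℝ (Fin (k + 1))) 1) :=
    isClosed_sphere.measurableSet
  refine norm_integral_le_of_le_rpow_neg_max (d := fun x => ‖x - y‖ / 2) (sub_pos.2 hr1)
    (by positivity) (by linarith) (by linarith) (by fun_prop) (fun t ht => ?_)
    (ae_restrict_of_forall_mem hS fun x hx => ?_)
  · have hset : {x | ‖x - y‖ / 2 ≤ t} ∩ sphere 0 1 = sphere 0 1 ∩ closedBall y (2 * t) := by
      rw [inter_comm]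
      congr! 1
      ext x
      rw [mem_closedBall_iff_norm, ← div_le_iff₀' two_pos]
      rfl
    rw [Measure.restrict_apply (measurableSet_le (by fun_prop) measurable_const), hset]
    refine (hcap y hy (2 * t) (by positivity)).trans_eq ?_
    rw [Real.rpow_natCast, mul_pow]
    ring_nf
  · rw [Real.norm_of_nonneg (by positivity)]
    exact Real.rpow_le_rpow_of_nonpos (by positivity)
      (max_one_sub_le_norm_smul_sub (mem_sphere_zero_iff_norm.1 hx) hy hr0 hr1.le) (by linarith)
end

section
/- Let n ≥ 2 and m > n-1. Then there exists C > 0 such that for all ρ, r ∈ [0,1) and all unit vectors y' ∈ S^{n-1}, ∫_{S^{n-1}} |ρ r x' - y'|^{-m} dσ(x') ≤ C (1 - ρ r)^{-(m-n+1)}. -/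
set_option maxHeartbeats 1000000
open MeasureTheory Set

lemma coord_abs_le_norm {n : ℕ} (x : EuclideanSpace ℝ (Fin n)) (i : Fin n) :
    |x i| ≤ ‖x‖ := by
  rw [EuclideanSpace.norm_eq]
  have h1 : ‖x i‖ ^ 2 ≤ ∑ j, ‖x j‖ ^ 2 :=
    Finset.single_le_sum (f := fun j => ‖x j‖ ^ 2) (fun j _ => sq_nonneg _) (Finset.mem_univ i)
  have h2 := Real.sqrt_le_sqrt h1
  simpa [Real.sqrt_sq_eq_abs, Real.norm_eq_abs, abs_abs] using h2

lemma sum_sq_of_norm_one {n : ℕ} (x : EuclideanSpace ℝ (Fin n)) (hx : ‖x‖ = 1) :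
    ∑ i, x i ^ 2 = 1 := by
  have h0 : (0:ℝ) ≤ ∑ i, ‖x i‖ ^ 2 := Finset.sum_nonneg fun _ _ => sq_nonneg _
  have h1 := Real.sq_sqrt h0
  rw [← EuclideanSpace.norm_eq, hx, one_pow] at h1
  simpa [Real.norm_eq_abs, sq_abs] using h1.symm



noncomputable def sphF (N : ℕ) (u : Fin N → ℝ) : EuclideanSpace ℝ (Fin (N+1)) :=
  WithLp.toLp 2 (Fin.cons (Real.sqrt (1 - ∑ j, u j ^ 2)) u : Fin (N+1) → ℝ)

lemma sqrt_diff_le {a b : ℝ} (ha : 1/4 ≤ a) (hab : a ≤ b) :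
    Real.sqrt b - Real.sqrt a ≤ b - a := by
  have h1 : (1:ℝ)/2 ≤ Real.sqrt a := by
    rw [show (1:ℝ)/2 = Real.sqrt (1/4) by
      rw [show (1:ℝ)/4 = (1/2)^2 by norm_num, Real.sqrt_sq (by norm_num : (0:ℝ) ≤ 1/2)]]
    exact Real.sqrt_le_sqrt ha
  have h2 := Real.sq_sqrt (by linarith : (0:ℝ) ≤ a)
  have h3 := Real.sq_sqrt (by linarith : (0:ℝ) ≤ b)
  have h4 := Real.sqrt_le_sqrt hab
  nlinarith [mul_nonneg (sub_nonneg.2 h4) (by linarith : (0:ℝ) ≤ Real.sqrt a + Real.sqrt b - 1)]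

lemma sqrt_diff_le' {a b : ℝ} (ha : 1/4 ≤ a) (hb : 1/4 ≤ b) :
    |Real.sqrt b - Real.sqrt a| ≤ |b - a| := by
  rcases le_total a b with h | h
  · rw [abs_of_nonneg (by linarith [Real.sqrt_le_sqrt h] : (0:ℝ) ≤ Real.sqrt b - Real.sqrt a),
      abs_of_nonneg (by linarith : (0:ℝ) ≤ b - a)]
    exact sqrt_diff_le ha h
  · rw [abs_sub_comm, abs_sub_comm b a,
      abs_of_nonneg (by linarith [Real.sqrt_le_sqrt h] : (0:ℝ) ≤ Real.sqrt a - Real.sqrt b),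
      abs_of_nonneg (by linarith : (0:ℝ) ≤ a - b)]
    exact sqrt_diff_le hb h

lemma sphF_dist (N : ℕ) (u v : Fin N → ℝ)
    (hu : ∑ j, u j ^ 2 ≤ 3/4) (hv : ∑ j, v j ^ 2 ≤ 3/4) :
    dist (sphF N u) (sphF N v) ≤ (3*N+3) * dist u v := by
  have hd : ∀ j, |u j - v j| ≤ dist u v := fun j => by
    simpa [Real.dist_eq] using dist_le_pi_dist u v j
  have hd0 : (0:ℝ) ≤ dist u v := dist_nonneg
  have hub : ∀ j, |u j| ≤ 1 := by
    intro j
    have h1 : u j ^ 2 ≤ 3/4 :=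
      le_trans (Finset.single_le_sum (f := fun j => u j ^ 2) (fun j _ => sq_nonneg _)
        (Finset.mem_univ j)) hu
    nlinarith [abs_nonneg (u j), sq_abs (u j)]
  have hvb : ∀ j, |v j| ≤ 1 := by
    intro j
    have h1 : v j ^ 2 ≤ 3/4 :=
      le_trans (Finset.single_le_sum (f := fun j => v j ^ 2) (fun j _ => sq_nonneg _)
        (Finset.mem_univ j)) hv
    nlinarith [abs_nonneg (v j), sq_abs (v j)]
  -- bound on difference of sums of squares
  have hQ : |(∑ j, u j ^ 2) - ∑ j, v j ^ 2| ≤ 2 * N * dist u v := by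
    rw [← Finset.sum_sub_distrib]
    refine le_trans (Finset.abs_sum_le_sum_abs _ _) ?_
    have : ∀ j ∈ Finset.univ, |u j ^ 2 - v j ^ 2| ≤ 2 * dist u v := by
      intro j _
      have h1 : u j ^ 2 - v j ^ 2 = (u j - v j) * (u j + v j) := by ring
      rw [h1, abs_mul]
      have h2 : |u j + v j| ≤ 2 := (abs_add_le _ _).trans (by linarith [hub j, hvb j])
      calc |u j - v j| * |u j + v j| ≤ dist u v * 2 :=
            mul_le_mul (hd j) h2 (abs_nonneg _) hd0
        _ = 2 * dist u v := by ring
    refine le_trans (Finset.sum_le_sum this) ?_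
    simp [Finset.sum_const, Finset.card_univ]
    ring_nf
    norm_num
  -- bound on the sqrt part
  have hS : |Real.sqrt (1 - ∑ j, u j ^ 2) - Real.sqrt (1 - ∑ j, v j ^ 2)|
      ≤ 2 * N * dist u v := by
    refine le_trans (sqrt_diff_le' (by linarith) (by linarith)) ?_
    rw [show (1 - ∑ j, u j ^ 2) - (1 - ∑ j, v j ^ 2)
        = -((∑ j, u j ^ 2) - ∑ j, v j ^ 2) from by ring, abs_neg]
    exact hQ
  -- assemble
  rw [EuclideanSpace.dist_eq]
  have key : ∑ i, dist (sphF N u i) (sphF N v i) ^ 2 ≤ ((3*N+3) * dist u v)^2 := by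
    rw [Fin.sum_univ_succ]
    have h0 : dist (sphF N u 0) (sphF N v 0) ^ 2 ≤ (2 * N * dist u v)^2 := by
      have : dist (sphF N u 0) (sphF N v 0)
          = |Real.sqrt (1 - ∑ j, u j ^ 2) - Real.sqrt (1 - ∑ j, v j ^ 2)| := by
        simp [sphF, Real.dist_eq]
      rw [this]
      have h2 := hS
      nlinarith [abs_nonneg (Real.sqrt (1 - ∑ j, u j ^ 2) - Real.sqrt (1 - ∑ j, v j ^ 2)),
        sq_abs (Real.sqrt (1 - ∑ j, u j ^ 2) - Real.sqrt (1 - ∑ j, v j ^ 2)),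
        mul_nonneg (mul_nonneg (by norm_num : (0:ℝ) ≤ 2) (Nat.cast_nonneg N : (0:ℝ) ≤ N)) hd0]
    have h1 : ∀ j : Fin N, dist (sphF N u j.succ) (sphF N v j.succ) ^ 2 ≤ dist u v ^ 2 := by
      intro j
      have : dist (sphF N u j.succ) (sphF N v j.succ) = |u j - v j| := by
        simp [sphF, Real.dist_eq]
      rw [this]
      have := hd j
      nlinarith [abs_nonneg (u j - v j), sq_abs (u j - v j)]
    have h2 : ∑ j : Fin N, dist (sphF N u j.succ) (sphF N v j.succ) ^ 2
        ≤ N * dist u v ^ 2 := by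
      refine le_trans (Finset.sum_le_sum (fun j _ => h1 j)) ?_
      simp [Finset.sum_const, Finset.card_univ]
    have hN0 : (0:ℝ) ≤ N := Nat.cast_nonneg N
    nlinarith [sq_nonneg (dist u v), sq_nonneg ((N:ℝ) * dist u v)]
  calc Real.sqrt (∑ i, dist (sphF N u i) (sphF N v i) ^ 2)
      ≤ Real.sqrt (((3*N+3) * dist u v)^2) := Real.sqrt_le_sqrt key
    _ = (3*N+3) * dist u v := Real.sqrt_sq (by positivity)

open scoped NNReal ENNReal

lemma sphF_lipschitzOn (N : ℕ) :
    LipschitzOnWith ((3*N+3 : ℕ) : ℝ≥0) (sphF N) {u : Fin N → ℝ | ∑ j, u j ^ 2 ≤ 3/4} := by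
  rw [lipschitzOnWith_iff_dist_le_mul]
  intro u hu v hv
  refine le_trans (sphF_dist N u v hu hv) (le_of_eq ?_)
  push_cast
  ring

lemma cap_z0 (N : ℕ) (hN : 1 ≤ N) (δ : ℝ) (hδ0 : 0 < δ) (hδ : δ ≤ 1/2) :
    μH[(N:ℝ)] (Metric.sphere (0 : EuclideanSpace ℝ (Fin (N+1))) 1 ∩
        Metric.ball (EuclideanSpace.single (0 : Fin (N+1)) (1:ℝ)) δ)
      ≤ ENNReal.ofReal ((3*N+3 : ℝ)^N * (2*δ)^N) := by
  set z₀ : EuclideanSpace ℝ (Fin (N+1)) := EuclideanSpace.single (0 : Fin (N+1)) (1:ℝ) with hz₀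
  set D' : Set (Fin N → ℝ) := {u | (∑ j, u j ^ 2 ≤ 3/4) ∧ ∀ j, |u j| ≤ δ} with hD'
  have hsub : Metric.sphere (0 : EuclideanSpace ℝ (Fin (N+1))) 1 ∩ Metric.ball z₀ δ
      ⊆ sphF N '' D' := by
    rintro x ⟨hx1, hx2⟩
    rw [mem_sphere_zero_iff_norm] at hx1
    rw [Metric.mem_ball] at hx2
    have hxz : ∀ i, |x i - z₀ i| ≤ dist x z₀ := by
      intro i
      have := coord_abs_le_norm (x - z₀) i
      simpa [dist_eq_norm] using this
    have hz00 : z₀ 0 = 1 := by simp [hz₀, EuclideanSpace.single_apply]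
    have hx0 : 1/2 ≤ x 0 := by
      have := hxz 0
      rw [hz00] at this
      have habs := abs_le.1 (this.trans hx2.le)
      linarith
    have hsum : ∑ i, x i ^ 2 = 1 := sum_sq_of_norm_one x hx1
    have hsplit : x 0 ^ 2 + ∑ j : Fin N, x j.succ ^ 2 = 1 := by
      rw [← hsum, Fin.sum_univ_succ]
    refine ⟨Fin.tail x, ⟨?_, ?_⟩, ?_⟩
    · show ∑ j : Fin N, (Fin.tail x) j ^ 2 ≤ 3/4
      have h1 : ∑ j : Fin N, (Fin.tail x) j ^ 2 = 1 - x 0 ^ 2 := by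
        simp only [Fin.tail]
        linarith
      rw [h1]; nlinarith
    · intro j
      have h1 := hxz j.succ
      have hzs : z₀ j.succ = 0 := by
        simp [hz₀, EuclideanSpace.single_apply, Fin.succ_ne_zero]
      rw [hzs, sub_zero] at h1
      exact h1.trans hx2.le
    · ext i
      refine Fin.cases ?_ ?_ i
      · show Real.sqrt (1 - ∑ j, (Fin.tail x) j ^ 2) = x 0
        have h1 : 1 - ∑ j : Fin N, (Fin.tail x) j ^ 2 = x 0 ^ 2 := by
          simp only [Fin.tail]
          linarith
        rw [h1, Real.sqrt_sq (by linarith)]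
      · intro j
        show (Fin.tail x) j = x j.succ
        rfl
  have hD'sub : D' ⊆ {u : Fin N → ℝ | ∑ j, u j ^ 2 ≤ 3/4} := fun u hu => hu.1
  have hlip := (sphF_lipschitzOn N).mono hD'sub
  have h1 : μH[(N:ℝ)] (sphF N '' D')
      ≤ ((((3*N+3 : ℕ) : ℝ≥0)) : ℝ≥0∞) ^ (N:ℝ) * μH[(N:ℝ)] D' :=
    hlip.hausdorffMeasure_image_le (by positivity)
  have hbox : D' ⊆ Set.pi Set.univ (fun _ : Fin N => Icc (-δ) δ) := by
    intro u hu j _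
    exact abs_le.1 (hu.2 j)
  have hμpi : μH[(N:ℝ)] = (volume : Measure (Fin N → ℝ)) := by
    have := hausdorffMeasure_pi_real (ι := Fin N)
    simpa using this
  have h2 : μH[(N:ℝ)] D' ≤ ENNReal.ofReal ((2*δ)^N) := by
    rw [hμpi]
    refine le_trans (measure_mono hbox) ?_
    rw [volume_pi_pi]
    simp only [Real.volume_Icc]
    rw [Finset.prod_const, Finset.card_univ, Fintype.card_fin,
      ← ENNReal.ofReal_pow (by linarith)]
    apply le_of_eq
    congr 1
    ring
  have hK : ((((3*N+3 : ℕ) : ℝ≥0)) : ℝ≥0∞) = ENNReal.ofReal ((3*N+3 : ℝ)) := by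
    have h := ENNReal.ofReal_natCast (3*N+3)
    rw [show (((3*N+3:ℕ)):ℝ) = (3*(N:ℝ)+3) from by push_cast; ring] at h
    rw [h]
    norm_cast
  calc μH[(N:ℝ)] (Metric.sphere (0 : EuclideanSpace ℝ (Fin (N+1))) 1 ∩ Metric.ball z₀ δ)
      ≤ μH[(N:ℝ)] (sphF N '' D') := measure_mono hsub
    _ ≤ ((((3*N+3 : ℕ) : ℝ≥0)) : ℝ≥0∞) ^ (N:ℝ) * μH[(N:ℝ)] D' := h1
    _ ≤ ((((3*N+3 : ℕ) : ℝ≥0)) : ℝ≥0∞) ^ (N:ℝ) * ENNReal.ofReal ((2*δ)^N) :=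
        mul_le_mul_right h2 _
    _ = ENNReal.ofReal ((3*N+3 : ℝ)^N * (2*δ)^N) := by
        rw [ENNReal.rpow_natCast, hK, ← ENNReal.ofReal_pow (by positivity),
          ← ENNReal.ofReal_mul (by positivity)]

lemma cap_any (N : ℕ) (hN : 1 ≤ N) (z : EuclideanSpace ℝ (Fin (N+1))) (hz : ‖z‖ = 1)
    (δ : ℝ) (hδ0 : 0 < δ) (hδ : δ ≤ 1/2) :
    μH[(N:ℝ)] (Metric.sphere (0 : EuclideanSpace ℝ (Fin (N+1))) 1 ∩ Metric.ball z δ)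
      ≤ ENNReal.ofReal ((3*N+3 : ℝ)^N * (2*δ)^N) := by
  set z₀ : EuclideanSpace ℝ (Fin (N+1)) := EuclideanSpace.single (0 : Fin (N+1)) (1:ℝ) with hz₀
  have hz₀n : ‖z₀‖ = 1 := by
    rw [hz₀, EuclideanSpace.norm_single]
    norm_num
  set φ := Submodule.reflection (ℝ ∙ (z - z₀))ᗮ with hφ
  have hφz : φ z = z₀ := Submodule.reflection_sub (by rw [hz, hz₀n])
  have himg : φ '' (Metric.sphere (0 : EuclideanSpace ℝ (Fin (N+1))) 1 ∩ Metric.ball z δ)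
      = Metric.sphere (0 : EuclideanSpace ℝ (Fin (N+1))) 1 ∩ Metric.ball z₀ δ := by
    ext y
    constructor
    · rintro ⟨x, ⟨hx1, hx2⟩, rfl⟩
      rw [mem_sphere_zero_iff_norm] at hx1
      refine ⟨mem_sphere_zero_iff_norm.2 (by rw [φ.norm_map, hx1]), ?_⟩
      rw [Metric.mem_ball] at hx2 ⊢
      rw [← hφz, φ.dist_map]
      exact hx2
    · rintro ⟨hy1, hy2⟩
      rw [mem_sphere_zero_iff_norm] at hy1
      refine ⟨φ.symm y, ⟨?_, ?_⟩, by simp⟩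
      · exact mem_sphere_zero_iff_norm.2 (by rw [φ.symm.norm_map, hy1])
      · rw [Metric.mem_ball]
        have : dist (φ.symm y) z = dist (φ (φ.symm y)) (φ z) := (φ.dist_map _ _).symm
        rw [this, φ.apply_symm_apply, hφz]
        exact Metric.mem_ball.1 hy2
  have := φ.isometry.hausdorffMeasure_image
      (Or.inl (by positivity : (0:ℝ) ≤ (N:ℝ)))
      (Metric.sphere (0 : EuclideanSpace ℝ (Fin (N+1))) 1 ∩ Metric.ball z δ)
  rw [himg] at this
  rw [← this]
  exact cap_z0 N hN δ hδ0 hδ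

lemma sphere_fin (N : ℕ) (hN : 1 ≤ N) :
    μH[(N:ℝ)] (Metric.sphere (0 : EuclideanSpace ℝ (Fin (N+1))) 1) < ⊤ := by
  set S := Metric.sphere (0 : EuclideanSpace ℝ (Fin (N+1))) 1 with hS
  have hc : IsCompact S := isCompact_sphere _ _
  have hcov : S ⊆ ⋃ z ∈ S, Metric.ball z (1/4) := by
    intro z hz
    exact mem_biUnion hz (Metric.mem_ball_self (by norm_num))
  obtain ⟨t, hts, htf, htcov⟩ := hc.elim_finite_subcover_image
    (fun z _ => Metric.isOpen_ball) hcov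
  calc μH[(N:ℝ)] S ≤ μH[(N:ℝ)] (⋃ z ∈ t, S ∩ Metric.ball z (1/4)) := by
        refine measure_mono ?_
        intro x hx
        obtain ⟨z, hzt, hxz⟩ := Set.mem_iUnion₂.1 (htcov hx)
        exact mem_biUnion hzt ⟨hx, hxz⟩
    _ ≤ ∑ z ∈ htf.toFinset, μH[(N:ℝ)] (S ∩ Metric.ball z (1/4)) := by
        have : (⋃ z ∈ t, S ∩ Metric.ball z (1/4))
            = ⋃ z ∈ htf.toFinset, S ∩ Metric.ball z (1/4) := by
          simp [Set.Finite.mem_toFinset]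
        rw [this]
        exact measure_biUnion_finset_le _ _
    _ < ⊤ := by
        refine ENNReal.sum_lt_top.2 fun z hzt => ?_
        have hz1 : ‖z‖ = 1 := mem_sphere_zero_iff_norm.1 (hts (htf.mem_toFinset.1 hzt))
        have hca := cap_any N hN z hz1 (1/4) (by norm_num) (by norm_num)
        exact lt_of_le_of_lt hca ENNReal.ofReal_lt_top

lemma cap_bound (N : ℕ) (hN : 1 ≤ N) :
    ∃ A : ℝ, 0 < A ∧ ∀ z : EuclideanSpace ℝ (Fin (N+1)), ‖z‖ = 1 → ∀ δ : ℝ, 0 < δ →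
      μH[(N:ℝ)] (Metric.sphere (0 : EuclideanSpace ℝ (Fin (N+1))) 1 ∩ Metric.ball z δ)
        ≤ ENNReal.ofReal (A * δ ^ N) := by
  set A₁ : ℝ := (3*N+3 : ℝ)^N * 2^N with hA₁
  set M : ℝ := (μH[(N:ℝ)] (Metric.sphere (0 : EuclideanSpace ℝ (Fin (N+1))) 1)).toReal with hM
  have hM0 : 0 ≤ M := ENNReal.toReal_nonneg
  refine ⟨A₁ + M * 2^N + 1, by positivity, ?_⟩
  intro z hz δ hδ0
  rcases le_or_gt δ (1/2) with h | h
  · refine le_trans (cap_any N hN z hz δ hδ0 h) ?_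
    apply ENNReal.ofReal_le_ofReal
    have h1 : (2*δ)^N = 2^N * δ^N := mul_pow 2 δ N
    calc (3*N+3 : ℝ)^N * (2*δ)^N = A₁ * δ^N := by rw [hA₁, h1]; ring
      _ ≤ (A₁ + M * 2^N + 1) * δ^N := by
          have : (0:ℝ) ≤ δ^N := by positivity
          nlinarith [mul_nonneg (mul_nonneg hM0 (by positivity : (0:ℝ) ≤ (2:ℝ)^N)) this]
  · calc μH[(N:ℝ)] (Metric.sphere (0 : EuclideanSpace ℝ (Fin (N+1))) 1 ∩ Metric.ball z δ)
        ≤ μH[(N:ℝ)] (Metric.sphere (0 : EuclideanSpace ℝ (Fin (N+1))) 1) :=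
          measure_mono inter_subset_left
      _ = ENNReal.ofReal M := (ENNReal.ofReal_toReal (sphere_fin N hN).ne).symm
      _ ≤ ENNReal.ofReal ((A₁ + M * 2^N + 1) * δ ^ N) := by
          apply ENNReal.ofReal_le_ofReal
          have h2 : (1:ℝ) ≤ (2*δ)^N := one_le_pow₀ (by linarith)
          have h3 : (2*δ:ℝ)^N = 2^N * δ^N := mul_pow 2 δ N
          have h4 : (0:ℝ) ≤ δ^N := by positivity
          have hA₁0 : (0:ℝ) ≤ A₁ := by positivity
          nlinarith [mul_nonneg hA₁0 h4]

open intervalIntegral in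
theorem stmt4 (n : ℕ) (hn : 2 ≤ n) (m : ℝ) (hm : (n : ℝ) - 1 < m) :
    ∃ C : ℝ, 0 < C ∧ ∀ ρ r : ℝ, 0 ≤ ρ → ρ < 1 → 0 ≤ r → r < 1 →
      ∀ y' : EuclideanSpace ℝ (Fin n), ‖y'‖ = 1 →
      ∫ x' in Metric.sphere (0 : EuclideanSpace ℝ (Fin n)) 1,
          ‖(ρ * r) • x' - y'‖ ^ (-m) ∂μH[(n : ℝ) - 1]
        ≤ C * (1 - ρ * r) ^ (-(m - (n : ℝ) + 1)) := by
  obtain ⟨N, rfl⟩ : ∃ N, n = N + 1 := ⟨n-1, by omega⟩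
  have hN : 1 ≤ N := by omega
  have hNr : ((N+1:ℕ):ℝ) - 1 = (N:ℝ) := by push_cast; ring
  rw [hNr] at hm
  have hexp : -(m - ((N+1:ℕ):ℝ) + 1) = -(m - (N:ℝ)) := by push_cast; ring
  rw [hNr, hexp]
  obtain ⟨A, hA, hcap⟩ := cap_bound N hN
  have hN1 : (1:ℝ) ≤ (N:ℝ) := by exact_mod_cast hN
  have hm0 : 0 < m := by linarith
  have hmN : 0 < m - N := by linarith
  set C₀ : ℝ := A * 2^N * m / (m - N) with hC₀
  have hC₀pos : 0 < C₀ :=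
    div_pos (mul_pos (mul_pos hA (by positivity)) hm0) hmN
  refine ⟨C₀ + 1, by linarith, ?_⟩
  intro ρ r hρ0 hρ1 hr0 hr1 y' hy'
  set s : ℝ := ρ * r with hs
  have hs0 : 0 ≤ s := mul_nonneg hρ0 hr0
  have hs1 : s < 1 := by nlinarith
  set ε : ℝ := 1 - s with hε
  have hε0 : 0 < ε := by rw [hε]; linarith
  set S := Metric.sphere (0 : EuclideanSpace ℝ (Fin (N+1))) 1 with hS
  set f : EuclideanSpace ℝ (Fin (N+1)) → ℝ := fun x => ‖s • x - y'‖ ^ (-m) with hf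
  have key1 : ∀ x : EuclideanSpace ℝ (Fin (N+1)), ‖x‖ = 1 → ε ≤ ‖s • x - y'‖ := by
    intro x hx
    have h1 : ‖s • x‖ = s := by rw [norm_smul, hx, Real.norm_of_nonneg hs0, mul_one]
    have h2 := norm_sub_norm_le y' (s • x)
    rw [hy', h1] at h2
    rw [norm_sub_rev]
    rw [hε]
    linarith
  have key2 : ∀ x : EuclideanSpace ℝ (Fin (N+1)), ‖x‖ = 1 →
      ‖x - y'‖ ≤ ‖s • x - y'‖ + ε := by
    intro x hx
    have hxy : x - y' = (s • x - y') + (1-s) • x := by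
      rw [sub_smul, one_smul]; abel
    calc ‖x - y'‖ = ‖(s • x - y') + (1-s) • x‖ := by rw [← hxy]
      _ ≤ ‖s • x - y'‖ + ‖(1-s) • x‖ := norm_add_le _ _
      _ = ‖s • x - y'‖ + ε := by
          rw [norm_smul, hx, mul_one, Real.norm_of_nonneg (by linarith), hε]
  have hfm : Measurable f := by
    rw [hf]; fun_prop
  have hf_nn : 0 ≤ᵐ[μH[(N:ℝ)].restrict S] f :=
    Filter.Eventually.of_forall (fun x => Real.rpow_nonneg (norm_nonneg _) _)
  rw [integral_eq_lintegral_of_nonneg_ae hf_nn hfm.aestronglyMeasurable]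
  rw [lintegral_eq_lintegral_meas_lt _ hf_nn hfm.aemeasurable]
  set T : ℝ := ε ^ (-m) with hT
  have hT0 : 0 < T := Real.rpow_pos_of_pos hε0 _
  set p : ℝ := -(N:ℝ)/m with hp
  have hdiv : (N:ℝ)/m < 1 := (div_lt_one hm0).2 hm
  have hp1 : (-1:ℝ) < p := by rw [hp, neg_div]; linarith
  have hp1' : 0 < p + 1 := by linarith
  have hm1m : (-1:ℝ)/m < 0 := by rw [neg_div]; exact neg_neg_of_pos (by positivity)
  have hTε : T ^ (-1/m) = ε := by
    rw [hT, ← Real.rpow_mul hε0.le]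
    rw [show (-m) * (-1/m) = 1 by field_simp]
    exact Real.rpow_one ε
  -- pointwise measure bound
  have hmb : ∀ t ∈ Ioi (0:ℝ), (μH[(N:ℝ)].restrict S) {a | t < f a}
      ≤ (Ioo (0:ℝ) T).indicator (fun t => ENNReal.ofReal ((A * 2^N) * t ^ p)) t := by
    intro t ht
    have htpos : (0:ℝ) < t := ht
    have hsetm : MeasurableSet {a : EuclideanSpace ℝ (Fin (N+1)) | t < f a} :=
      measurableSet_lt measurable_const hfm
    rw [Measure.restrict_apply hsetm]
    rcases lt_or_ge t T with hlt | hge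
    · rw [Set.indicator_of_mem (show t ∈ Ioo (0:ℝ) T from ⟨htpos, hlt⟩)]
      set R : ℝ := t ^ (-1/m) with hR
      have hR0 : 0 < R := Real.rpow_pos_of_pos htpos _
      have hεR : ε ≤ R := by
        rw [← hTε, hR]
        exact (Real.rpow_lt_rpow_of_neg htpos hlt hm1m).le
      have hsub2 : {a | t < f a} ∩ S ⊆ S ∩ Metric.ball y' (2*R) := by
        rintro x ⟨hxf, hxS⟩
        have hx1 : ‖x‖ = 1 := mem_sphere_zero_iff_norm.1 hxS
        refine ⟨hxS, ?_⟩
        rw [Metric.mem_ball, dist_eq_norm]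
        have ha0 : 0 < ‖s • x - y'‖ := lt_of_lt_of_le hε0 (key1 x hx1)
        have h2 : ‖s • x - y'‖ < R := by
          have h3 := Real.rpow_lt_rpow_of_neg htpos (hxf : t < f x) hm1m
          rw [hf] at h3
          rw [← Real.rpow_mul (norm_nonneg _), show (-m) * (-1/m) = 1 by field_simp,
            Real.rpow_one] at h3
          exact h3
        have h4 := key2 x hx1
        linarith
      calc μH[(N:ℝ)] ({a | t < f a} ∩ S)
          ≤ μH[(N:ℝ)] (S ∩ Metric.ball y' (2*R)) := measure_mono hsub2
        _ ≤ ENNReal.ofReal (A * (2*R) ^ N) := hcap y' hy' (2*R) (by positivity)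
        _ = ENNReal.ofReal ((A * 2^N) * t ^ p) := by
            congr 1
            have hRN : R ^ N = t ^ p := by
              rw [hR, ← Real.rpow_natCast (t ^ (-1/m)) N, ← Real.rpow_mul htpos.le, hp]
              congr 1
              field_simp
            rw [mul_pow, hRN]
            ring
    · rw [Set.indicator_of_notMem (show t ∉ Ioo (0:ℝ) T from fun hmem => absurd hmem.2 (not_lt.2 hge))]
      have hempty : {a | t < f a} ∩ S = ∅ := by
        ext x
        simp only [mem_inter_iff, mem_setOf_eq, mem_empty_iff_false, iff_false, not_and]
        intro hxf hxS
        have hx1 : ‖x‖ = 1 := mem_sphere_zero_iff_norm.1 hxS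
        have h5 : f x ≤ T := by
          rw [hf, hT]
          exact Real.rpow_le_rpow_of_nonpos hε0 (key1 x hx1) (by linarith)
        linarith
      rw [hempty]
      simp
  -- integrate the bound
  have hint : IntegrableOn (fun t : ℝ => (A * 2^N) * t ^ p) (Ioo 0 T) := by
    have h0 : IntervalIntegrable (fun t : ℝ => t ^ p) volume 0 T :=
      intervalIntegral.intervalIntegrable_rpow' hp1
    have h1 : IntegrableOn (fun t : ℝ => t ^ p) (Ioc 0 T) :=
      (intervalIntegrable_iff_integrableOn_Ioc_of_le hT0.le).1 h0
    exact (h1.mono_set Ioo_subset_Ioc_self).const_mul _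
  have hnn : 0 ≤ᵐ[volume.restrict (Ioo 0 T)] fun t : ℝ => (A * 2^N) * t ^ p := by
    refine (ae_restrict_iff' measurableSet_Ioo).2 (Filter.Eventually.of_forall ?_)
    intro t ht
    have : 0 < t := ht.1
    positivity
  have hval : ∫ t in Ioo 0 T, (A * 2^N) * t ^ p = C₀ * ε ^ (-(m - N)) := by
    rw [MeasureTheory.integral_const_mul]
    rw [← integral_Ioc_eq_integral_Ioo, ← integral_of_le hT0.le]
    rw [integral_rpow (Or.inl hp1)]
    rw [Real.zero_rpow (by linarith)]
    have hTp : T ^ (p+1) = ε ^ (-(m - (N:ℝ))) := by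
      rw [hT, ← Real.rpow_mul hε0.le]
      congr 1
      rw [hp]
      field_simp
      ring
    have hpe : p + 1 = (m - N)/m := by rw [hp]; field_simp; ring
    rw [hTp, hC₀, hpe, sub_zero, div_div_eq_mul_div]
    ring
  calc (∫⁻ t in Ioi (0:ℝ), (μH[(N:ℝ)].restrict S) {a | t < f a}).toReal
      ≤ ((ENNReal.ofReal (C₀ * ε ^ (-(m - (N:ℝ)))))).toReal := by
        apply ENNReal.toReal_mono ENNReal.ofReal_ne_top
        calc ∫⁻ t in Ioi (0:ℝ), (μH[(N:ℝ)].restrict S) {a | t < f a}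
            ≤ ∫⁻ t in Ioi (0:ℝ),
                (Ioo (0:ℝ) T).indicator (fun t => ENNReal.ofReal ((A * 2^N) * t ^ p)) t := by
              refine setLIntegral_mono ?_ hmb
              exact (Measurable.indicator (by fun_prop) measurableSet_Ioo)
          _ = ∫⁻ t in Ioo (0:ℝ) T, ENNReal.ofReal ((A * 2^N) * t ^ p) := by
              rw [lintegral_indicator measurableSet_Ioo]
              rw [Measure.restrict_restrict measurableSet_Ioo]
              congr 1
              rw [inter_eq_self_of_subset_left Ioo_subset_Ioi_self]
          _ = ENNReal.ofReal (∫ t in Ioo (0:ℝ) T, (A * 2^N) * t ^ p) :=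
              (ofReal_integral_eq_lintegral_ofReal hint hnn).symm
          _ = ENNReal.ofReal (C₀ * ε ^ (-(m - (N:ℝ)))) := by rw [hval]
    _ ≤ (C₀ + 1) * ε ^ (-(m - (N:ℝ))) := by
        rw [ENNReal.toReal_ofReal (by positivity)]
        have hεp : 0 < ε ^ (-(m - (N:ℝ))) := Real.rpow_pos_of_pos hε0 _
        nlinarith
end

section
/- Let n ≥ 2, t > 0 a real exponent, β > 0, and K > (n-1)/t (here K plays the role of n+m with m > (n-1)/t - n). Then there exists C > 0 such that for every y in the open unit ball of ℝⁿ, ( ∫_{S^{n-1}} |x' - y|^{-Kt} dσ(x') )^{1/t} ≤ C (1-|y|)^{-K + (n-1)/t}. -/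
open MeasureTheory Set Metric Module
open scoped ENNReal NNReal RealInnerProductSpace Pointwise
set_option maxHeartbeats 1000000

private lemma sqrt_lip {A B : ℝ} (hA : 3/4 ≤ A) (hB : 3/4 ≤ B) :
    |Real.sqrt A - Real.sqrt B| ≤ |A - B| := by
  have hA0 : (0:ℝ) ≤ A := by linarith
  have hB0 : (0:ℝ) ≤ B := by linarith
  have h1 : Real.sqrt A ^ 2 = A := Real.sq_sqrt hA0
  have h2 : Real.sqrt B ^ 2 = B := Real.sq_sqrt hB0
  have h3 : (1:ℝ)/2 ≤ Real.sqrt A := by nlinarith [Real.sqrt_nonneg A]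
  have h4 : (1:ℝ)/2 ≤ Real.sqrt B := by nlinarith [Real.sqrt_nonneg B]
  rw [abs_sub_le_iff]
  constructor <;> nlinarith [le_abs_self (A - B), neg_abs_le (A - B)]

private lemma cap_param (n : ℕ) (hn : 2 ≤ n) (e : EuclideanSpace ℝ (Fin n)) (he : ‖e‖ = 1)
    {ρ : ℝ} (hρ0 : 0 < ρ) (hρ : ρ ≤ 1/2) :
    μH[(n:ℝ)-1] (sphere (0 : EuclideanSpace ℝ (Fin n)) 1 ∩ closedBall e ρ)
      ≤ (2:ℝ≥0∞)^((n:ℝ)-1) * (ENNReal.ofReal ρ)^((n:ℝ)-1) *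
        μH[(n:ℝ)-1] (closedBall (0 : EuclideanSpace ℝ (Fin (n-1))) 1) := by
  classical
  have hd : (0:ℝ) ≤ (n:ℝ) - 1 := by
    have : (2:ℝ) ≤ (n:ℝ) := by exact_mod_cast hn
    linarith
  set d : ℝ := (n:ℝ) - 1 with hd_def
  have he0 : e ≠ 0 := by intro h; rw [h] at he; simp at he
  set W := (ℝ ∙ e)ᗮ with hW
  borelize ↥W
  set g : W → EuclideanSpace ℝ (Fin n) :=
    fun w => (w : EuclideanSpace ℝ (Fin n)) + Real.sqrt (1 - ‖w‖^2) • e with hg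
  -- Lipschitz bound
  have hlip : LipschitzOnWith 2 g (closedBall (0:W) ρ) := by
    apply LipschitzOnWith.of_dist_le_mul
    intro w hw w' hw'
    rw [mem_closedBall, dist_zero_right] at hw hw'
    have hwρ : ‖w‖ ≤ 1/2 := hw.trans hρ
    have hw'ρ : ‖w'‖ ≤ 1/2 := hw'.trans hρ
    have hA : (3:ℝ)/4 ≤ 1 - ‖w‖^2 := by nlinarith [norm_nonneg w]
    have hB : (3:ℝ)/4 ≤ 1 - ‖w'‖^2 := by nlinarith [norm_nonneg w']
    have key := sqrt_lip hA hB
    have habs : |(1 - ‖w‖^2) - (1 - ‖w'‖^2)| ≤ ‖w - w'‖ := by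
      have h1 : |‖w‖ - ‖w'‖| ≤ ‖w - w'‖ := abs_norm_sub_norm_le w w'
      have h2 : |(1 - ‖w‖^2) - (1 - ‖w'‖^2)| = |‖w'‖ - ‖w‖| * (‖w'‖ + ‖w‖) := by
        rw [← abs_of_nonneg (show (0:ℝ) ≤ ‖w'‖ + ‖w‖ by positivity), ← abs_mul]
        ring_nf
      rw [h2, abs_sub_comm]
      calc |‖w‖ - ‖w'‖| * (‖w'‖ + ‖w‖) ≤ ‖w - w'‖ * 1 := by
            apply mul_le_mul h1 (by linarith) (by positivity) (norm_nonneg _)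
        _ = ‖w - w'‖ := mul_one _
    rw [dist_eq_norm, dist_eq_norm]
    have hcoe : ‖(w : EuclideanSpace ℝ (Fin n)) - (w' : EuclideanSpace ℝ (Fin n))‖ = ‖w - w'‖ := by
      rw [← Submodule.coe_sub]; rfl
    calc ‖g w - g w'‖
        = ‖((w : EuclideanSpace ℝ (Fin n)) - (w' : EuclideanSpace ℝ (Fin n)))
          + (Real.sqrt (1 - ‖w‖^2) - Real.sqrt (1 - ‖w'‖^2)) • e‖ := by
          simp only [hg, sub_smul]; congr 1; abel
      _ ≤ ‖(w : EuclideanSpace ℝ (Fin n)) - (w' : EuclideanSpace ℝ (Fin n))‖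
          + ‖(Real.sqrt (1 - ‖w‖^2) - Real.sqrt (1 - ‖w'‖^2)) • e‖ := norm_add_le _ _
      _ ≤ ‖w - w'‖ + ‖w - w'‖ := by
          rw [hcoe, norm_smul, he, mul_one, Real.norm_eq_abs]
          gcongr
          calc |Real.sqrt (1 - ‖w‖^2) - Real.sqrt (1 - ‖w'‖^2)|
              ≤ |(1 - ‖w‖^2) - (1 - ‖w'‖^2)| := key
            _ ≤ ‖w - w'‖ := habs
      _ = (2:ℝ≥0) * ‖w - w'‖ := by push_cast; ring
  -- the cap is covered by the graph map
  have hsub : sphere (0 : EuclideanSpace ℝ (Fin n)) 1 ∩ closedBall e ρ ⊆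
      g '' (closedBall (0:W) ρ) := by
    rintro x ⟨hxS, hxB⟩
    rw [mem_sphere_zero_iff_norm] at hxS
    rw [mem_closedBall, dist_eq_norm] at hxB
    set c : ℝ := ⟪e, x⟫ with hc_def
    have hee : ⟪e, e⟫ = (1:ℝ) := by
      rw [real_inner_self_eq_norm_sq, he]; norm_num
    have hsq : ‖x - e‖^2 = 2 - 2*c := by
      rw [norm_sub_sq_real, hxS, he, real_inner_comm]
      ring
    have hc1 : c = 1 - ‖x - e‖^2/2 := by linarith
    have hcle : c ≤ 1 := by nlinarith [sq_nonneg ‖x - e‖]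
    have hxB2 : ‖x - e‖^2 ≤ ρ^2 := by nlinarith [norm_nonneg (x - e)]
    have hcpos : (0:ℝ) ≤ c := by nlinarith
    set w0 : EuclideanSpace ℝ (Fin n) := x - c • e with hw0_def
    have hw0mem : w0 ∈ (ℝ ∙ e)ᗮ := by
      rw [Submodule.mem_orthogonal_singleton_iff_inner_right]
      rw [hw0_def, inner_sub_right, real_inner_smul_right, hee]
      simp [hc_def]
    have hw0norm : ‖w0‖^2 = 1 - c^2 := by
      rw [hw0_def, norm_sub_sq_real, hxS, norm_smul, real_inner_smul_right,
        Real.norm_eq_abs, abs_of_nonneg hcpos, he, real_inner_comm e x, ← hc_def]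
      ring
    have hw0le : ‖w0‖ ≤ ρ := by
      have h1 : ‖w0‖^2 ≤ ρ^2 := by nlinarith [hxB2, hsq, hcle, hcpos]
      calc ‖w0‖ = Real.sqrt (‖w0‖^2) := (Real.sqrt_sq (norm_nonneg _)).symm
        _ ≤ Real.sqrt (ρ^2) := Real.sqrt_le_sqrt h1
        _ = ρ := Real.sqrt_sq hρ0.le
    refine ⟨⟨w0, hw0mem⟩, ?_, ?_⟩
    · rw [mem_closedBall, dist_zero_right]
      exact hw0le
    · show w0 + Real.sqrt (1 - ‖(⟨w0, hw0mem⟩ : W)‖^2) • e = x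
      have hnc : ‖(⟨w0, hw0mem⟩ : W)‖ = ‖w0‖ := rfl
      rw [hnc, hw0norm]
      have h11 : 1 - (1 - c^2) = c^2 := by ring
      rw [h11, Real.sqrt_sq hcpos, hw0_def]
      abel
  -- the ball in W has the Hausdorff measure of the standard ball
  haveI hfact : Fact (finrank ℝ (EuclideanSpace ℝ (Fin n)) = (n-1) + 1) := by
    constructor
    rw [finrank_euclideanSpace_fin]
    omega
  have hWstd : μH[d] (closedBall (0:W) 1)
      = μH[d] (closedBall (0 : EuclideanSpace ℝ (Fin (n-1))) 1) := by
    set φ := (OrthonormalBasis.fromOrthogonalSpanSingleton (𝕜 := ℝ) (n-1) he0).repr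
    have himg : φ.toIsometryEquiv '' (closedBall (0:W) 1)
        = closedBall (0 : EuclideanSpace ℝ (Fin (n-1))) 1 := by
      rw [IsometryEquiv.image_closedBall]
      have h0 : φ.toIsometryEquiv 0 = 0 := by
        simp [LinearIsometryEquiv.coe_toIsometryEquiv]
      rw [h0]
    rw [← himg, IsometryEquiv.hausdorffMeasure_image]
  -- scaling
  have hscale : μH[d] (closedBall (0:W) ρ)
      = (ENNReal.ofReal ρ)^d * μH[d] (closedBall (0:W) 1) := by
    have hball : closedBall (0:W) ρ = (ρ:ℝ) • closedBall (0:W) 1 := by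
      rw [smul_closedBall' hρ0.ne']
      simp [abs_of_pos hρ0]
    rw [hball, MeasureTheory.Measure.hausdorffMeasure_smul₀ hd hρ0.ne']
    rw [ENNReal.smul_def, smul_eq_mul]
    congr 1
    rw [ENNReal.coe_rpow_of_nonneg _ hd, ← enorm_eq_nnnorm, Real.enorm_eq_ofReal hρ0.le]
  calc μH[d] (sphere (0 : EuclideanSpace ℝ (Fin n)) 1 ∩ closedBall e ρ)
      ≤ μH[d] (g '' (closedBall (0:W) ρ)) := measure_mono hsub
    _ ≤ ((2:ℝ≥0) : ℝ≥0∞)^d * μH[d] (closedBall (0:W) ρ) := hlip.hausdorffMeasure_image_le hd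
    _ = (2:ℝ≥0∞)^d * ((ENNReal.ofReal ρ)^d * μH[d] (closedBall (0:W) 1)) := by
        rw [hscale]; norm_num
    _ = (2:ℝ≥0∞)^d * (ENNReal.ofReal ρ)^d *
        μH[d] (closedBall (0 : EuclideanSpace ℝ (Fin (n-1))) 1) := by
        rw [hWstd, mul_assoc]

private lemma Cb_lt_top (n : ℕ) (hn : 2 ≤ n) :
    μH[(n:ℝ)-1] (closedBall (0 : EuclideanSpace ℝ (Fin (n-1))) 1) < ⊤ := by
  have h1 : 1 ≤ n := by omega
  have hcast : ((n:ℝ)-1) = ((finrank ℝ (EuclideanSpace ℝ (Fin (n-1)))):ℝ) := by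
    rw [finrank_euclideanSpace_fin, Nat.cast_sub h1, Nat.cast_one]
  rw [hcast]
  exact (isCompact_closedBall _ _).measure_lt_top

private lemma sphere_fin_s5 (n : ℕ) (hn : 2 ≤ n) :
    μH[(n:ℝ)-1] (sphere (0 : EuclideanSpace ℝ (Fin n)) 1) < ⊤ := by
  have hd : (0:ℝ) ≤ (n:ℝ) - 1 := by
    have : (2:ℝ) ≤ (n:ℝ) := by exact_mod_cast hn
    linarith
  have hcomp : IsCompact (sphere (0 : EuclideanSpace ℝ (Fin n)) 1) := isCompact_sphere _ _
  have hcover : sphere (0 : EuclideanSpace ℝ (Fin n)) 1 ⊆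
      ⋃ x ∈ sphere (0 : EuclideanSpace ℝ (Fin n)) 1, ball x (1/2) :=
    fun x hx => mem_biUnion hx (mem_ball_self (by norm_num))
  obtain ⟨b, hbsub, hbfin, hbcov⟩ :=
    hcomp.elim_finite_subcover_image (fun x _ => isOpen_ball) hcover
  have hsub2 : sphere (0 : EuclideanSpace ℝ (Fin n)) 1 ⊆
      ⋃ x ∈ b, sphere (0 : EuclideanSpace ℝ (Fin n)) 1 ∩ closedBall x (1/2) := by
    intro z hz
    obtain ⟨x, hxb, hzx⟩ := mem_iUnion₂.mp (hbcov hz)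
    exact mem_iUnion₂.mpr ⟨x, hxb, hz, ball_subset_closedBall hzx⟩
  calc μH[(n:ℝ)-1] (sphere (0 : EuclideanSpace ℝ (Fin n)) 1)
      ≤ μH[(n:ℝ)-1] (⋃ x ∈ b, sphere (0 : EuclideanSpace ℝ (Fin n)) 1 ∩ closedBall x (1/2)) :=
        measure_mono hsub2
    _ < ⊤ := by
        apply measure_biUnion_lt_top hbfin
        intro x hxb
        refine lt_of_le_of_lt (cap_param n hn x (by simpa using hbsub hxb) (by norm_num)
          (le_refl _)) ?_
        apply ENNReal.mul_lt_top
        · apply ENNReal.mul_lt_top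
          · exact ENNReal.rpow_lt_top_of_nonneg hd (by norm_num)
          · exact ENNReal.rpow_lt_top_of_nonneg hd ENNReal.ofReal_ne_top
        · exact Cb_lt_top n hn

private lemma cap_all (n : ℕ) (hn : 2 ≤ n) :
    ∃ Ccap : ℝ≥0∞, 0 < Ccap ∧ Ccap < ⊤ ∧
      ∀ (y : EuclideanSpace ℝ (Fin n)), ‖y‖ < 1 → ∀ r : ℝ, 0 < r →
        μH[(n:ℝ)-1] (sphere (0 : EuclideanSpace ℝ (Fin n)) 1 ∩ closedBall y r)
          ≤ Ccap * (ENNReal.ofReal r)^((n:ℝ)-1) := by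
  have hd : (0:ℝ) ≤ (n:ℝ) - 1 := by
    have : (2:ℝ) ≤ (n:ℝ) := by exact_mod_cast hn
    linarith
  set d : ℝ := (n:ℝ) - 1 with hd_def
  set Cb := μH[d] (closedBall (0 : EuclideanSpace ℝ (Fin (n-1))) 1) with hCb
  set CS := μH[d] (sphere (0 : EuclideanSpace ℝ (Fin n)) 1) with hCS
  set κ : ℝ≥0∞ := (ENNReal.ofReal (1/8))^d with hκ
  have hκ0 : κ ≠ 0 := by
    rw [hκ]
    exact (ENNReal.rpow_pos (by simp) ENNReal.ofReal_ne_top).ne'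
  have hκtop : κ ≠ ⊤ := by
    rw [hκ]
    exact (ENNReal.rpow_lt_top_of_nonneg hd ENNReal.ofReal_ne_top).ne
  set A : ℝ≥0∞ := (2:ℝ≥0∞)^d * (2:ℝ≥0∞)^d * Cb with hA
  refine ⟨A + CS / κ + 1, ?_, ?_, ?_⟩
  · exact lt_of_lt_of_le zero_lt_one le_add_self
  · have hA_top : A < ⊤ := by
      apply ENNReal.mul_lt_top
      · exact ENNReal.mul_lt_top (ENNReal.rpow_lt_top_of_nonneg hd (by norm_num))
          (ENNReal.rpow_lt_top_of_nonneg hd (by norm_num))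
      · exact Cb_lt_top n hn
    have hCSκ : CS / κ < ⊤ := ENNReal.div_lt_top (sphere_fin_s5 n hn).ne hκ0
    exact ENNReal.add_lt_top.mpr ⟨ENNReal.add_lt_top.mpr ⟨hA_top, hCSκ⟩, ENNReal.one_lt_top⟩
  · intro y hy r hr
    by_cases hr8 : 1/8 ≤ r
    · -- large radius: bound by total sphere measure
      have h1 : μH[d] (sphere (0 : EuclideanSpace ℝ (Fin n)) 1 ∩ closedBall y r) ≤ CS :=
        measure_mono inter_subset_left
      have h2 : κ ≤ (ENNReal.ofReal r)^d :=
        ENNReal.rpow_le_rpow (ENNReal.ofReal_le_ofReal hr8) hd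
      calc μH[d] (sphere (0 : EuclideanSpace ℝ (Fin n)) 1 ∩ closedBall y r)
          ≤ CS := h1
        _ = CS / κ * κ := (ENNReal.div_mul_cancel hκ0 hκtop).symm
        _ ≤ (A + CS / κ + 1) * (ENNReal.ofReal r)^d := by
            apply mul_le_mul' _ h2
            calc CS / κ ≤ A + CS / κ := le_add_self
              _ ≤ A + CS / κ + 1 := le_self_add
    · push_neg at hr8
      by_cases hne : (sphere (0 : EuclideanSpace ℝ (Fin n)) 1 ∩ closedBall y r).Nonempty
      · obtain ⟨x, hxS, hxB⟩ := hne
        rw [mem_sphere_zero_iff_norm] at hxS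
        rw [mem_closedBall, dist_eq_norm] at hxB
        have h1y : 1 - ‖y‖ ≤ r := by
          have := norm_sub_norm_le x y
          rw [hxS] at this
          linarith
        have hy0 : ‖y‖ ≠ 0 := by
          intro h
          rw [h] at h1y
          linarith
        set e := ‖y‖⁻¹ • y with he_def
        have he : ‖e‖ = 1 := by
          rw [he_def, norm_smul, norm_inv, norm_norm, inv_mul_cancel₀ hy0]
        have hye : ‖y - e‖ = 1 - ‖y‖ := by
          have : y - e = (1 - ‖y‖⁻¹) • y := by
            rw [he_def, sub_smul, one_smul]
          rw [this, norm_smul, Real.norm_eq_abs]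
          have hy1 : (0:ℝ) < ‖y‖ := lt_of_le_of_ne (norm_nonneg y) (Ne.symm hy0)
          have : |1 - ‖y‖⁻¹| = ‖y‖⁻¹ - 1 := by
            rw [abs_of_nonpos]
            · ring
            · have : 1 ≤ ‖y‖⁻¹ := (one_le_inv₀ hy1).mpr hy.le
              linarith
          rw [this]
          field_simp
        have hsub : sphere (0 : EuclideanSpace ℝ (Fin n)) 1 ∩ closedBall y r ⊆
            sphere (0 : EuclideanSpace ℝ (Fin n)) 1 ∩ closedBall e (2*r) := by
          rintro z ⟨hzS, hzB⟩
          refine ⟨hzS, ?_⟩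
          rw [mem_closedBall, dist_eq_norm] at hzB ⊢
          calc ‖z - e‖ = ‖(z - y) + (y - e)‖ := by congr 1; abel
            _ ≤ ‖z - y‖ + ‖y - e‖ := norm_add_le _ _
            _ ≤ r + (1 - ‖y‖) := by rw [hye]; exact add_le_add_left hzB _
            _ ≤ 2*r := by linarith
        calc μH[d] (sphere (0 : EuclideanSpace ℝ (Fin n)) 1 ∩ closedBall y r)
            ≤ μH[d] (sphere (0 : EuclideanSpace ℝ (Fin n)) 1 ∩ closedBall e (2*r)) :=
              measure_mono hsub
          _ ≤ (2:ℝ≥0∞)^d * (ENNReal.ofReal (2*r))^d * Cb :=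
              cap_param n hn e he (by linarith) (by linarith)
          _ = A * (ENNReal.ofReal r)^d := by
              rw [hA, ENNReal.ofReal_mul (by norm_num : (0:ℝ) ≤ 2),
                ENNReal.mul_rpow_of_nonneg _ _ hd]
              have : ENNReal.ofReal 2 = (2:ℝ≥0∞) := by
                rw [ENNReal.ofReal_ofNat]
              rw [this]
              ring
          _ ≤ (A + CS / κ + 1) * (ENNReal.ofReal r)^d := by
              apply mul_le_mul' _ (le_refl _)
              calc A ≤ A + CS / κ := le_self_add
                _ ≤ A + CS / κ + 1 := le_self_add
      · rw [not_nonempty_iff_eq_empty] at hne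
        rw [hne]
        simp

theorem stmt5 (n : ℕ) (hn : 2 ≤ n) (t β K : ℝ) (ht : 0 < t) (hβ : 0 < β)
    (hK : ((n : ℝ) - 1) / t < K) :
    ∃ C : ℝ, 0 < C ∧ ∀ y : EuclideanSpace ℝ (Fin n), ‖y‖ < 1 →
      (∫ x' in Metric.sphere (0 : EuclideanSpace ℝ (Fin n)) 1,
          ‖x' - y‖ ^ (-(K * t)) ∂μH[(n : ℝ) - 1]) ^ (1 / t)
        ≤ C * (1 - ‖y‖) ^ (-K + ((n : ℝ) - 1) / t) := by
  have hd1 : (1:ℝ) ≤ (n:ℝ) - 1 := by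
    have : (2:ℝ) ≤ (n:ℝ) := by exact_mod_cast hn
    linarith
  set d : ℝ := (n:ℝ) - 1 with hd_def
  have hd0 : (0:ℝ) < d := by linarith
  set a : ℝ := K * t with ha_def
  have ha : d < a := by
    have := (div_lt_iff₀ ht).mp hK
    linarith
  have ha0 : (0:ℝ) < a := lt_trans hd0 ha
  have hs1 : d / a < 1 := (div_lt_one ha0).mpr ha
  have hs0 : (0:ℝ) < d / a := div_pos hd0 ha0
  obtain ⟨Ccap, hC0, hCtop, hcap⟩ := cap_all n hn
  set C₀ : ℝ := Ccap.toReal / (1 - d / a) with hC₀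
  have hC₀0 : 0 ≤ C₀ := div_nonneg ENNReal.toReal_nonneg (by linarith)
  refine ⟨max 1 (C₀ ^ (1/t)), lt_of_lt_of_le one_pos (le_max_left _ _), ?_⟩
  intro y hy
  set δ : ℝ := 1 - ‖y‖ with hδ_def
  have hδ0 : 0 < δ := by simp only [hδ_def]; linarith
  set T : ℝ := δ ^ (-a) with hT_def
  have hT0 : 0 < T := Real.rpow_pos_of_pos hδ0 _
  set f : EuclideanSpace ℝ (Fin n) → ℝ := fun x => ‖x - y‖ ^ (-a) with hf_def
  have hfm : Measurable f := by fun_prop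
  have hf_nn : ∀ x, 0 ≤ f x := fun x => Real.rpow_nonneg (norm_nonneg _) _
  set μ : Measure (EuclideanSpace ℝ (Fin n)) :=
    μH[d].restrict (sphere (0 : EuclideanSpace ℝ (Fin n)) 1) with hμ
  -- layer cake
  have hlc : ∫⁻ x, ENNReal.ofReal (f x) ∂μ = ∫⁻ lam in Ioi (0:ℝ), μ {x | lam < f x} :=
    lintegral_eq_lintegral_meas_lt μ (Filter.Eventually.of_forall hf_nn) hfm.aemeasurable
  -- pointwise bound for the distribution function
  have hmeas_le : ∀ lam ∈ Ioi (0:ℝ), μ {x | lam < f x} ≤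
      (Ioc (0:ℝ) T).indicator (fun lam => Ccap * ENNReal.ofReal (lam ^ (-(d/a)))) lam := by
    intro lam hlam
    rw [mem_Ioi] at hlam
    have hset : MeasurableSet {x | lam < f x} := measurableSet_lt measurable_const hfm
    rw [hμ, Measure.restrict_apply hset]
    by_cases hT : lam ≤ T
    · rw [Set.indicator_of_mem (show lam ∈ Ioc (0:ℝ) T from ⟨hlam, hT⟩)]
      set r : ℝ := lam ^ (-(1/a)) with hr_def
      have hr0 : 0 < r := Real.rpow_pos_of_pos hlam _
      have hsub : {x | lam < f x} ∩ sphere (0 : EuclideanSpace ℝ (Fin n)) 1 ⊆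
          sphere (0 : EuclideanSpace ℝ (Fin n)) 1 ∩ closedBall y r := by
        rintro x ⟨hxf, hxS⟩
        refine ⟨hxS, ?_⟩
        rw [mem_setOf_eq] at hxf
        have hm0 : 0 < ‖x - y‖ := by
          rcases eq_or_lt_of_le (norm_nonneg (x - y)) with h | h
          · exfalso
            rw [hf_def] at hxf
            simp only at hxf
            rw [← h, Real.zero_rpow (neg_ne_zero.mpr ha0.ne')] at hxf
            linarith
          · exact h
        rw [mem_closedBall, dist_eq_norm]
        have hlt : (‖x - y‖ ^ (-a)) ^ (-(1/a)) < lam ^ (-(1/a)) :=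
          Real.rpow_lt_rpow_of_neg hlam hxf (neg_lt_zero.mpr (by positivity))
        have heq : (‖x - y‖ ^ (-a)) ^ (-(1/a)) = ‖x - y‖ := by
          rw [← Real.rpow_mul (norm_nonneg _)]
          have hexp : (-a) * -(1/a) = 1 := by field_simp
          rw [hexp, Real.rpow_one]
        rw [heq] at hlt
        exact hlt.le
      have hrw : (ENNReal.ofReal r)^d = ENNReal.ofReal (lam ^ (-(d/a))) := by
        rw [ENNReal.ofReal_rpow_of_pos hr0, hr_def, ← Real.rpow_mul hlam.le]
        congr 1
        ring
      calc μH[d] ({x | lam < f x} ∩ sphere (0 : EuclideanSpace ℝ (Fin n)) 1)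
          ≤ μH[d] (sphere (0 : EuclideanSpace ℝ (Fin n)) 1 ∩ closedBall y r) :=
            measure_mono hsub
        _ ≤ Ccap * (ENNReal.ofReal r)^d := hcap y hy r hr0
        _ = Ccap * ENNReal.ofReal (lam ^ (-(d/a))) := by rw [hrw]
    · rw [indicator_of_notMem (fun h => hT h.2)]
      have hempty : {x | lam < f x} ∩ sphere (0 : EuclideanSpace ℝ (Fin n)) 1 = ∅ := by
        rw [eq_empty_iff_forall_notMem]
        rintro x ⟨hxf, hxS⟩
        rw [mem_sphere_zero_iff_norm] at hxS
        have hδx : δ ≤ ‖x - y‖ := by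
          have := norm_sub_norm_le x y
          rw [hxS] at this
          simp only [hδ_def]
          linarith
        have : f x ≤ T := by
          rw [hf_def, hT_def]
          exact Real.rpow_le_rpow_of_nonpos hδ0 hδx (neg_nonpos.mpr ha0.le)
        rw [mem_setOf_eq] at hxf
        push_neg at hT
        linarith
      rw [hempty]
      simp
  -- integrate the bound
  have hint : IntegrableOn (fun lam : ℝ => lam ^ (-(d/a))) (Ioc 0 T) := by
    have h1 : IntervalIntegrable (fun x : ℝ => x ^ (-(d/a))) volume 0 T :=
      intervalIntegral.intervalIntegrable_rpow' (by linarith)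
    exact (intervalIntegrable_iff_integrableOn_Ioc_of_le hT0.le).mp h1
  have hval : ∫ lam in Ioc (0:ℝ) T, lam ^ (-(d/a)) = T ^ (1 - d/a) / (1 - d/a) := by
    rw [← intervalIntegral.integral_of_le hT0.le]
    rw [integral_rpow (Or.inl (by linarith))]
    rw [Real.zero_rpow (by linarith : -(d/a) + 1 ≠ 0), sub_zero,
      show -(d/a) + 1 = 1 - d/a from by ring]
  have hbound : ∫⁻ x, ENNReal.ofReal (f x) ∂μ ≤
      Ccap * ENNReal.ofReal (T ^ (1 - d/a) / (1 - d/a)) := by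
    rw [hlc]
    have hmble : Measurable ((Ioc (0:ℝ) T).indicator
        (fun lam => Ccap * ENNReal.ofReal (lam ^ (-(d/a))))) := by
      apply Measurable.indicator _ measurableSet_Ioc
      fun_prop
    calc ∫⁻ lam in Ioi (0:ℝ), μ {x | lam < f x}
        ≤ ∫⁻ lam in Ioi (0:ℝ), (Ioc (0:ℝ) T).indicator
            (fun lam => Ccap * ENNReal.ofReal (lam ^ (-(d/a)))) lam :=
          setLIntegral_mono hmble hmeas_le
      _ = ∫⁻ lam in Ioc (0:ℝ) T, Ccap * ENNReal.ofReal (lam ^ (-(d/a))) := by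
          rw [lintegral_indicator measurableSet_Ioc, Measure.restrict_restrict measurableSet_Ioc,
            inter_eq_left.mpr Ioc_subset_Ioi_self]
      _ = Ccap * ∫⁻ lam in Ioc (0:ℝ) T, ENNReal.ofReal (lam ^ (-(d/a))) :=
          lintegral_const_mul' _ _ hCtop.ne
      _ = Ccap * ENNReal.ofReal (T ^ (1 - d/a) / (1 - d/a)) := by
          congr 1
          rw [← ofReal_integral_eq_lintegral_ofReal hint
            ((ae_restrict_iff' measurableSet_Ioc).mpr (Filter.Eventually.of_forall
              (fun x hx => Real.rpow_nonneg hx.1.le _)))]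
          rw [hval]
  -- from lintegral to the Bochner integral
  have hTδ : T ^ (1 - d/a) = δ ^ (d - a) := by
    rw [hT_def, ← Real.rpow_mul hδ0.le]
    congr 1
    field_simp
    ring
  have hbo : ∫ x in sphere (0 : EuclideanSpace ℝ (Fin n)) 1, f x ∂μH[d]
      = (∫⁻ x, ENNReal.ofReal (f x) ∂μ).toReal := by
    rw [hμ]
    exact integral_eq_lintegral_of_nonneg_ae (Filter.Eventually.of_forall hf_nn)
      hfm.aestronglyMeasurable
  have hfin : Ccap * ENNReal.ofReal (T ^ (1 - d/a) / (1 - d/a)) ≠ ⊤ :=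
    (ENNReal.mul_lt_top hCtop ENNReal.ofReal_lt_top).ne
  have hInt_le : ∫ x in sphere (0 : EuclideanSpace ℝ (Fin n)) 1, f x ∂μH[d]
      ≤ C₀ * δ ^ (d - a) := by
    rw [hbo]
    calc (∫⁻ x, ENNReal.ofReal (f x) ∂μ).toReal
        ≤ (Ccap * ENNReal.ofReal (T ^ (1 - d/a) / (1 - d/a))).toReal :=
          ENNReal.toReal_mono hfin hbound
      _ = Ccap.toReal * (T ^ (1 - d/a) / (1 - d/a)) := by
          rw [ENNReal.toReal_mul, ENNReal.toReal_ofReal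
            (div_nonneg (Real.rpow_nonneg hT0.le _) (by linarith))]
      _ = C₀ * δ ^ (d - a) := by
          rw [hTδ, hC₀]
          ring
  -- conclusion : raise to the power 1/t
  have hInt_nonneg : 0 ≤ ∫ x in sphere (0 : EuclideanSpace ℝ (Fin n)) 1, f x ∂μH[d] :=
    integral_nonneg hf_nn
  have hfinal : (∫ x in sphere (0 : EuclideanSpace ℝ (Fin n)) 1, f x ∂μH[d]) ^ (1/t)
      ≤ (C₀ ^ (1/t)) * δ ^ (-K + d/t) := by
    calc (∫ x in sphere (0 : EuclideanSpace ℝ (Fin n)) 1, f x ∂μH[d]) ^ (1/t)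
        ≤ (C₀ * δ ^ (d - a)) ^ (1/t) :=
          Real.rpow_le_rpow hInt_nonneg hInt_le (by positivity)
      _ = (C₀ ^ (1/t)) * (δ ^ (d - a)) ^ (1/t) :=
          Real.mul_rpow hC₀0 (Real.rpow_nonneg hδ0.le _)
      _ = (C₀ ^ (1/t)) * δ ^ (-K + d/t) := by
          rw [← Real.rpow_mul hδ0.le]
          congr 1
          rw [ha_def]
          field_simp
          ring
  refine le_trans hfinal ?_
  apply mul_le_mul_of_nonneg_right (le_max_right _ _) (Real.rpow_nonneg hδ0.le _)
end

section
/- Let 0 < p ≤ 1, m > -1, λ > 0, and let M : [0,1) → [0,∞) be increasing. Then there is a constant C = C(p, m, λ) such that for all r ∈ [0,1), ( ∫₀¹ M(R) (1-R)^m (1-rR)^{-λ} dR )^p ≤ C ∫₀¹ M(R)^p (1-R)^{mp + p - 1} (1-rR)^{-λ p} dR. -/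
/-!
On the dyadic shells `[1 - 2⁻ⁿ, 1 - 2⁻ⁿ⁻¹)` the integrand `f = M (1 - R)^m (1 - rR)^(-λ)` is, up
to the factor `K = 2^(|m| + |λ|)`, increasing from one shell into the next: `M` is increasing, and
`1 - R` and `1 - rR` vary by at most a factor `2` there. So the integral of `f` over a shell is at
most `K f(t) 2⁻ⁿ⁻¹`, where `t` is the left end of the next shell, and the `p`-th power of this is at
most `2 K^(2p)` times the integral of `f^p (1 - R)^(p-1)` over the next shell. Summing over the
shells with `(∑ aₙ)^p ≤ ∑ aₙ^p` for `p ≤ 1` gives the inequality with `C = 2 K^(2p)`.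
-/

open MeasureTheory Set
open scoped ENNReal

lemma ENNReal.rpow_tsum_le_tsum_rpow {ι : Type*} {p : ℝ} (hp : 0 < p) (hp1 : p ≤ 1)
    (a : ι → ℝ≥0∞) : (∑' i, a i) ^ p ≤ ∑' i, a i ^ p := by
  rw [ENNReal.tsum_eq_iSup_sum,
    Monotone.map_iSup_of_continuousAt ENNReal.continuous_rpow_const.continuousAt
      (fun x y h => ENNReal.rpow_le_rpow h hp.le) (ENNReal.zero_rpow_of_pos hp)]
  exact iSup_le fun s => (Finset.le_sum_of_subadditive (· ^ p) (ENNReal.zero_rpow_of_pos hp).le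
    (fun x y => ENNReal.rpow_add_le_add_rpow x y hp.le hp1) s a).trans (ENNReal.sum_le_tsum s)

lemma Real.rpow_le_two_rpow_abs_mul_rpow {a b : ℝ} (hb : 0 < b) (hba : b ≤ a) (hab : a ≤ 2 * b)
    (e : ℝ) : a ^ e ≤ 2 ^ |e| * b ^ e := by
  have h1 : 1 ≤ a / b := (one_le_div hb).2 hba
  have h2 : a / b ≤ 2 := (div_le_iff₀ hb).2 hab
  calc a ^ e = (a / b) ^ e * b ^ e := by
        rw [Real.div_rpow (hb.le.trans hba) hb.le,
          div_mul_cancel₀ _ (Real.rpow_pos_of_pos hb e).ne']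
    _ ≤ 2 ^ |e| * b ^ e := by
        gcongr
        exact (Real.rpow_le_rpow_of_exponent_le h1 (le_abs_self e)).trans
          (Real.rpow_le_rpow (by positivity) h2 (abs_nonneg e))

def dyadicShell (n : ℕ) : Set ℝ := Ico (1 - 2⁻¹ ^ n) (1 - 2⁻¹ ^ (n + 1))

lemma mem_dyadicShell {n : ℕ} {x : ℝ} :
    x ∈ dyadicShell n ↔ 2⁻¹ ^ (n + 1) < 1 - x ∧ 1 - x ≤ 2⁻¹ ^ n := by
  simp only [dyadicShell, mem_Ico]
  constructor <;> rintro ⟨h1, h2⟩ <;> constructor <;> linarith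

lemma left_mem_dyadicShell (n : ℕ) : 1 - 2⁻¹ ^ n ∈ dyadicShell n :=
  left_mem_Ico.2 (sub_lt_sub_left (pow_lt_pow_right_of_lt_one₀ (by norm_num) (by norm_num)
    n.lt_succ_self) 1)

lemma dyadicShell_subset_Ico (n : ℕ) : dyadicShell n ⊆ Ico 0 1 := fun x hx => by
  have := pow_le_one₀ (n := n) (by norm_num : (0:ℝ) ≤ 2⁻¹) (by norm_num)
  have := pow_pos (by norm_num : (0:ℝ) < 2⁻¹) (n + 1)
  rw [mem_dyadicShell] at hx
  constructor <;> linarith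

lemma measurableSet_dyadicShell (n : ℕ) : MeasurableSet (dyadicShell n) := measurableSet_Ico

lemma volume_dyadicShell (n : ℕ) : volume (dyadicShell n) = ENNReal.ofReal (2⁻¹ ^ (n + 1)) := by
  rw [dyadicShell, Real.volume_Ico]
  congr 1
  ring

lemma pairwise_disjoint_dyadicShell : Pairwise (Function.onFun Disjoint dyadicShell) :=
  Monotone.pairwise_disjoint_on_Ico_succ (f := fun n : ℕ => 1 - (2⁻¹ : ℝ) ^ n) fun _ _ h =>
    sub_le_sub_left (pow_le_pow_of_le_one (by norm_num) (by norm_num) h) 1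

lemma iUnion_dyadicShell : ⋃ n, dyadicShell n = Ico 0 1 := by
  refine (iUnion_subset dyadicShell_subset_Ico).antisymm fun x hx => mem_iUnion.2 ?_
  obtain ⟨n, h⟩ := exists_nat_pow_near_of_lt_one (sub_pos.2 hx.2) (by linarith [hx.1])
    (by norm_num) (by norm_num : (2⁻¹ : ℝ) < 1)
  exact ⟨n, mem_dyadicShell.2 h⟩

lemma setLIntegral_Ioo_zero_one_eq_tsum_dyadicShell (f : ℝ → ℝ≥0∞) :
    ∫⁻ x in Ioo 0 1, f x = ∑' n, ∫⁻ x in dyadicShell n, f x := by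
  rw [setLIntegral_congr Ioo_ae_eq_Ico, ← iUnion_dyadicShell,
    lintegral_iUnion measurableSet_dyadicShell pairwise_disjoint_dyadicShell]

def DyadicQuasiMonotone (K : ℝ) (g : ℝ → ℝ≥0∞) : Prop :=
  ∀ x ∈ Ico (0:ℝ) 1, ∀ y ∈ Ico (0:ℝ) 1, x ≤ y → 1 - x ≤ 2 * (1 - y) → g x ≤ ENNReal.ofReal K * g y

lemma DyadicQuasiMonotone.setLIntegral_dyadicShell_le {K : ℝ} {g : ℝ → ℝ≥0∞}
    (hg : DyadicQuasiMonotone K g) (n : ℕ) :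
    ∫⁻ x in dyadicShell n, g x ≤
      ENNReal.ofReal K * g (1 - 2⁻¹ ^ (n + 1)) * ENNReal.ofReal (2⁻¹ ^ (n + 1)) := by
  rw [← volume_dyadicShell, ← setLIntegral_const]
  refine setLIntegral_mono' (measurableSet_dyadicShell n) fun x hx => ?_
  have hx' := mem_dyadicShell.1 hx
  have h2 : (2⁻¹ : ℝ) ^ n = 2 * 2⁻¹ ^ (n + 1) := by rw [pow_succ]; ring
  exact hg x (dyadicShell_subset_Ico n hx) _
    (dyadicShell_subset_Ico _ (left_mem_dyadicShell _)) (by linarith) (by linarith)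

lemma DyadicQuasiMonotone.rpow_mul_le_setLIntegral_dyadicShell {K : ℝ} {g : ℝ → ℝ≥0∞} {p : ℝ}
    (hg : DyadicQuasiMonotone K g) (hp : 0 ≤ p) (hp1 : p ≤ 1) (n : ℕ) :
    g (1 - 2⁻¹ ^ n) ^ p * ENNReal.ofReal ((2⁻¹ ^ n) ^ p) ≤
      2 * (ENNReal.ofReal K ^ p *
        ∫⁻ x in dyadicShell n, g x ^ p * ENNReal.ofReal ((1 - x) ^ (p - 1))) := by
  set s : ℝ := 2⁻¹ ^ n
  have hs : 0 < s := by positivity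
  have hs_succ : (2⁻¹ : ℝ) ^ (n + 1) = s / 2 := by rw [pow_succ]; ring
  have hvol : ENNReal.ofReal (s ^ p) =
      2 * (ENNReal.ofReal (s ^ (p - 1)) * volume (dyadicShell n)) := by
    rw [volume_dyadicShell, hs_succ, ← ENNReal.ofReal_mul (by positivity),
      ← ENNReal.ofReal_ofNat 2, ← ENNReal.ofReal_mul zero_le_two, Real.rpow_sub_one hs.ne']
    congr 1
    field_simp
  calc g (1 - s) ^ p * ENNReal.ofReal (s ^ p)
      = 2 * ∫⁻ _ in dyadicShell n, g (1 - s) ^ p * ENNReal.ofReal (s ^ (p - 1)) := by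
        rw [hvol, setLIntegral_const]; ring
    _ ≤ 2 * ∫⁻ x in dyadicShell n,
          ENNReal.ofReal K ^ p * (g x ^ p * ENNReal.ofReal ((1 - x) ^ (p - 1))) := by
        gcongr 2 * ?_
        refine setLIntegral_mono' (measurableSet_dyadicShell _) fun x hx => ?_
        have hx' : s / 2 < 1 - x ∧ 1 - x ≤ s := by
          rw [← hs_succ]; exact mem_dyadicShell.1 hx
        have hgx : g (1 - s) ^ p ≤ ENNReal.ofReal K ^ p * g x ^ p := by
          rw [← ENNReal.mul_rpow_of_nonneg _ _ hp]
          gcongr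
          exact hg (1 - s) (dyadicShell_subset_Ico _ (left_mem_dyadicShell n)) x
            (dyadicShell_subset_Ico _ hx) (by linarith) (by linarith)
        rw [← mul_assoc]
        exact mul_le_mul' hgx (ENNReal.ofReal_le_ofReal
          (Real.rpow_le_rpow_of_nonpos (by linarith) hx'.2 (by linarith)))
    _ = _ := by rw [lintegral_const_mul' _ _ (by simp [hp])]

lemma DyadicQuasiMonotone.rpow_setLIntegral_dyadicShell_le {K : ℝ} {g : ℝ → ℝ≥0∞} {p : ℝ}
    (hg : DyadicQuasiMonotone K g) (hp : 0 < p) (hp1 : p ≤ 1) (n : ℕ) :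
    (∫⁻ x in dyadicShell n, g x) ^ p ≤ 2 * ENNReal.ofReal K ^ p * ENNReal.ofReal K ^ p *
      ∫⁻ x in dyadicShell (n + 1), g x ^ p * ENNReal.ofReal ((1 - x) ^ (p - 1)) :=
  calc (∫⁻ x in dyadicShell n, g x) ^ p
      ≤ (ENNReal.ofReal K * g (1 - 2⁻¹ ^ (n + 1)) * ENNReal.ofReal (2⁻¹ ^ (n + 1))) ^ p :=
        ENNReal.rpow_le_rpow (hg.setLIntegral_dyadicShell_le n) hp.le
    _ = ENNReal.ofReal K ^ p *
          (g (1 - 2⁻¹ ^ (n + 1)) ^ p * ENNReal.ofReal ((2⁻¹ ^ (n + 1)) ^ p)) := by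
        rw [ENNReal.mul_rpow_of_nonneg _ _ hp.le, ENNReal.mul_rpow_of_nonneg _ _ hp.le,
          ENNReal.ofReal_rpow_of_nonneg (by positivity : (0:ℝ) ≤ 2⁻¹ ^ (n + 1)) hp.le, mul_assoc]
    _ ≤ ENNReal.ofReal K ^ p * (2 * (ENNReal.ofReal K ^ p *
          ∫⁻ x in dyadicShell (n + 1), g x ^ p * ENNReal.ofReal ((1 - x) ^ (p - 1)))) :=
        mul_le_mul_right (hg.rpow_mul_le_setLIntegral_dyadicShell hp.le hp1 (n + 1)) _
    _ = _ := by ring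

lemma DyadicQuasiMonotone.rpow_setLIntegral_le {K : ℝ} {g : ℝ → ℝ≥0∞} {p : ℝ}
    (hg : DyadicQuasiMonotone K g) (hp : 0 < p) (hp1 : p ≤ 1) :
    (∫⁻ x in Ioo 0 1, g x) ^ p ≤ 2 * ENNReal.ofReal K ^ p * ENNReal.ofReal K ^ p *
      ∫⁻ x in Ioo 0 1, g x ^ p * ENNReal.ofReal ((1 - x) ^ (p - 1)) := by
  simp only [setLIntegral_Ioo_zero_one_eq_tsum_dyadicShell]
  calc (∑' n, ∫⁻ x in dyadicShell n, g x) ^ p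
      ≤ ∑' n, (∫⁻ x in dyadicShell n, g x) ^ p := ENNReal.rpow_tsum_le_tsum_rpow hp hp1 _
    _ ≤ ∑' n, 2 * ENNReal.ofReal K ^ p * ENNReal.ofReal K ^ p *
          ∫⁻ x in dyadicShell (n + 1), g x ^ p * ENNReal.ofReal ((1 - x) ^ (p - 1)) :=
        ENNReal.tsum_le_tsum fun n => hg.rpow_setLIntegral_dyadicShell_le hp hp1 n
    _ ≤ _ := by
        rw [ENNReal.tsum_mul_left]
        exact mul_le_mul_right (ENNReal.tsum_comp_le_tsum_of_injective (add_left_injective 1)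
          fun n => ∫⁻ x in dyadicShell n, g x ^ p * ENNReal.ofReal ((1 - x) ^ (p - 1))) _

lemma one_sub_mul_pos {r x : ℝ} (hr0 : 0 ≤ r) (hr1 : r ≤ 1) (hx : x < 1) : 0 < 1 - r * x := by
  rcases le_total 0 x with h | h <;> nlinarith

lemma one_sub_mul_le_two_mul_one_sub_mul {r x y : ℝ} (hr0 : 0 ≤ r) (hr1 : r ≤ 1)
    (h : 1 - x ≤ 2 * (1 - y)) : 1 - r * x ≤ 2 * (1 - r * y) := by
  nlinarith [mul_le_mul_of_nonneg_left (show 2 * y - x ≤ 1 by linarith) hr0]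

lemma MonotoneOn.dyadicQuasiMonotone_mul_rpow_mul_rpow {m lam r : ℝ} {M : ℝ → ℝ}
    (hM : MonotoneOn M (Ico (0:ℝ) 1)) (hM0 : ∀ R ∈ Ico (0:ℝ) 1, 0 ≤ M R)
    (hr : r ∈ Ico (0:ℝ) 1) :
    DyadicQuasiMonotone (2 ^ |m| * 2 ^ |lam|)
      fun R => ENNReal.ofReal (M R * (1 - R) ^ m * (1 - r * R) ^ (-lam)) := by
  intro x hx y hy hxy h
  have hy1 : 0 < 1 - y := sub_pos.2 hy.2
  have hrx : 0 < 1 - r * x := one_sub_mul_pos hr.1 hr.2.le hx.2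
  have hry : 0 < 1 - r * y := one_sub_mul_pos hr.1 hr.2.le hy.2
  have hMy : 0 ≤ M y := hM0 y hy
  have hw1 : (1 - x) ^ m ≤ 2 ^ |m| * (1 - y) ^ m :=
    Real.rpow_le_two_rpow_abs_mul_rpow hy1 (by linarith) h m
  have hw2 : (1 - r * x) ^ (-lam) ≤ 2 ^ |lam| * (1 - r * y) ^ (-lam) := by
    rw [← abs_neg lam]
    exact Real.rpow_le_two_rpow_abs_mul_rpow hry
      (by linarith [mul_le_mul_of_nonneg_left hxy hr.1])
      (one_sub_mul_le_two_mul_one_sub_mul hr.1 hr.2.le h) _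
  rw [← ENNReal.ofReal_mul (by positivity)]
  refine ENNReal.ofReal_le_ofReal ?_
  calc M x * (1 - x) ^ m * (1 - r * x) ^ (-lam)
      ≤ M y * (2 ^ |m| * (1 - y) ^ m) * (2 ^ |lam| * (1 - r * y) ^ (-lam)) :=
        mul_le_mul (mul_le_mul (hM hx hy hxy) hw1 (Real.rpow_nonneg (by linarith [hx.2]) m) hMy)
          hw2 (Real.rpow_nonneg hrx.le _)
          (mul_nonneg hMy (mul_nonneg (by positivity) (Real.rpow_nonneg hy1.le m)))
    _ = 2 ^ |m| * 2 ^ |lam| * (M y * (1 - y) ^ m * (1 - r * y) ^ (-lam)) := by ring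

lemma ofReal_rpow_mul_ofReal_rpow_sub_one {a b c m lam p : ℝ} (ha : 0 ≤ a) (hb : 0 < b)
    (hc : 0 < c) (hp : 0 ≤ p) :
    ENNReal.ofReal (a * b ^ m * c ^ (-lam)) ^ p * ENNReal.ofReal (b ^ (p - 1)) =
      ENNReal.ofReal (a ^ p * b ^ (m * p + p - 1) * c ^ (-(lam * p))) := by
  rw [ENNReal.ofReal_rpow_of_nonneg (by positivity) hp, ← ENNReal.ofReal_mul (by positivity)]
  congr 1
  calc (a * b ^ m * c ^ (-lam)) ^ p * b ^ (p - 1)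
      = a ^ p * (b ^ (m * p) * b ^ (p - 1)) * c ^ (-lam * p) := by
        rw [Real.mul_rpow (by positivity) (by positivity), Real.mul_rpow ha (by positivity),
          ← Real.rpow_mul hb.le, ← Real.rpow_mul hc.le]
        ring
    _ = _ := by rw [← Real.rpow_add hb, add_sub_assoc, neg_mul]

theorem stmt9_general (p m lam : ℝ) (hp : 0 < p) (hp1 : p ≤ 1) :
    ∃ C : ℝ, 0 < C ∧ ∀ M : ℝ → ℝ,
      (∀ R ∈ Ico (0:ℝ) 1, 0 ≤ M R) → MonotoneOn M (Ico (0:ℝ) 1) →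
      ∀ r ∈ Ico (0:ℝ) 1,
      (∫⁻ R in Ioo (0:ℝ) 1, ENNReal.ofReal (M R * (1 - R) ^ m * (1 - r * R) ^ (-lam))) ^ p
        ≤ ENNReal.ofReal C *
          ∫⁻ R in Ioo (0:ℝ) 1,
            ENNReal.ofReal (M R ^ p * (1 - R) ^ (m * p + p - 1) * (1 - r * R) ^ (-(lam * p))) := by
  set k : ℝ := 2 ^ |m| * 2 ^ |lam|
  refine ⟨2 * k ^ p * k ^ p, by positivity, fun M hM0 hM r hr => ?_⟩
  have hC : ENNReal.ofReal (2 * k ^ p * k ^ p) =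
      2 * ENNReal.ofReal k ^ p * ENNReal.ofReal k ^ p := by
    rw [ENNReal.ofReal_mul (by positivity), ENNReal.ofReal_mul (by positivity),
      ENNReal.ofReal_rpow_of_nonneg (by positivity) hp.le, ENNReal.ofReal_ofNat]
  have hintegrand : ∀ R ∈ Ioo (0:ℝ) 1,
      ENNReal.ofReal (M R * (1 - R) ^ m * (1 - r * R) ^ (-lam)) ^ p *
          ENNReal.ofReal ((1 - R) ^ (p - 1)) =
        ENNReal.ofReal (M R ^ p * (1 - R) ^ (m * p + p - 1) * (1 - r * R) ^ (-(lam * p))) :=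
    fun R hR => ofReal_rpow_mul_ofReal_rpow_sub_one (hM0 R (Ioo_subset_Ico_self hR))
      (sub_pos.2 hR.2) (one_sub_mul_pos hr.1 hr.2.le hR.2) hp.le
  rw [hC, ← setLIntegral_congr_fun measurableSet_Ioo hintegrand]
  exact (hM.dyadicQuasiMonotone_mul_rpow_mul_rpow hM0 hr).rpow_setLIntegral_le hp hp1

theorem stmt9 (p m lam : ℝ) (hp : 0 < p) (hp1 : p ≤ 1) (hm : -1 < m) (hlam : 0 < lam) :
    ∃ C : ℝ, 0 < C ∧ ∀ M : ℝ → ℝ,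
      (∀ R ∈ Ico (0:ℝ) 1, 0 ≤ M R) → MonotoneOn M (Ico (0:ℝ) 1) →
      ∀ r ∈ Ico (0:ℝ) 1,
      (∫⁻ R in Ioo (0:ℝ) 1, ENNReal.ofReal (M R * (1 - R) ^ m * (1 - r * R) ^ (-lam))) ^ p
        ≤ ENNReal.ofReal C *
          ∫⁻ R in Ioo (0:ℝ) 1,
            ENNReal.ofReal (M R ^ p * (1 - R) ^ (m * p + p - 1) * (1 - r * R) ^ (-(lam * p))) :=
  stmt9_general p m lam hp hp1
end

section
/- Let n ≥ 2, γ ≥ 0, and K > γ + n - 1 (here K = t(n + m - α) with the paper's parameters). Then there exists C > 0 such that for every y in the open unit ball of ℝⁿ, ∫_{S^{n-1}} |x' - y|^{-K} dσ(x') ≤ C (1 - |y|)^{-K + n - 1}. -/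
/-!
Near any of its points the unit sphere is the graph of a 2-Lipschitz function over a disc in a
hyperplane, so every ball of radius `r` meets it in `μH[n-1]`-measure `O(r ^ (n-1))`. All points
of the sphere lie at distance at least `d = 1 - ‖y‖` from `y`; cutting the sphere into the dyadic
shells `2 ^ j d ≤ ‖x - y‖ ≤ 2 ^ (j+1) d` bounds the integral by
`∑ j, (2 ^ j d) ^ (-K) O((2 ^ (j+1) d) ^ (n-1))`, a geometric series with ratio `2 ^ (n-1-K) < 1`
and sum `O(d ^ (n-1-K))`.
-/

open MeasureTheory Set

open Metric
open scoped ENNReal NNReal RealInnerProductSpace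

theorem dyadic_rpow_mul_rpow_eq (s K : ℝ) {d : ℝ} (hd : 0 < d) (j : ℕ) :
    ((2 : ℝ) ^ j * d) ^ (-K) * ((2 : ℝ) ^ (j + 1) * d) ^ s
      = 2 ^ s * d ^ (s - K) * ((2 : ℝ) ^ (s - K)) ^ j := by
  have hpow (a : ℝ) : ((2 : ℝ) ^ j) ^ a = ((2 : ℝ) ^ a) ^ j := by
    rw [← Real.rpow_natCast_mul zero_le_two, mul_comm, Real.rpow_mul_natCast zero_le_two]
  rw [Real.mul_rpow (by positivity) hd.le, Real.mul_rpow (by positivity) hd.le, pow_succ,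
    Real.mul_rpow (by positivity) zero_le_two, hpow, hpow, sub_eq_add_neg,
    Real.rpow_add two_pos, Real.rpow_add hd, mul_pow]
  ring

section Dyadic

variable {X : Type*} [PseudoMetricSpace X]

theorem ofReal_dist_rpow_neg_le_tsum_indicator {K d : ℝ} (hK : 0 ≤ K) (hd : 0 < d) {x y : X}
    (hxy : d ≤ dist x y) :
    ENNReal.ofReal (dist x y ^ (-K)) ≤
      ∑' j : ℕ, (closedBall y (2 ^ (j + 1) * d)).indicator
        (fun _ => ENNReal.ofReal (((2 : ℝ) ^ j * d) ^ (-K))) x := by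
  obtain ⟨j, hj, hj'⟩ := exists_nat_pow_near ((one_le_div hd).mpr hxy) one_lt_two
  rw [le_div_iff₀ hd] at hj
  rw [div_lt_iff₀ hd] at hj'
  refine le_trans ?_ (ENNReal.le_tsum j)
  rw [indicator_of_mem (mem_closedBall.mpr hj'.le)]
  exact ENNReal.ofReal_le_ofReal
    (Real.rpow_le_rpow_of_nonpos (by positivity) hj (neg_nonpos.mpr hK))

variable [MeasurableSpace X] [OpensMeasurableSpace X]

theorem lintegral_ofReal_dist_rpow_neg_le {μ : Measure X} {y : X} {c : ℝ≥0∞} {s K d : ℝ}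
    (hK : 0 ≤ K) (hd : 0 < d)
    (hball : ∀ r, 0 < r → μ (closedBall y r) ≤ c * ENNReal.ofReal r ^ s)
    (hfar : ∀ᵐ x ∂μ, d ≤ dist x y) :
    ∫⁻ x, ENNReal.ofReal (dist x y ^ (-K)) ∂μ
      ≤ c * ENNReal.ofReal (2 ^ s) * (1 - ENNReal.ofReal (2 ^ (s - K)))⁻¹
          * ENNReal.ofReal (d ^ (s - K)) := by
  calc ∫⁻ x, ENNReal.ofReal (dist x y ^ (-K)) ∂μ
      ≤ ∫⁻ x, ∑' j : ℕ, (closedBall y (2 ^ (j + 1) * d)).indicator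
          (fun _ => ENNReal.ofReal (((2 : ℝ) ^ j * d) ^ (-K))) x ∂μ :=
        lintegral_mono_ae (hfar.mono fun x => ofReal_dist_rpow_neg_le_tsum_indicator hK hd)
    _ = ∑' j : ℕ, ENNReal.ofReal (((2 : ℝ) ^ j * d) ^ (-K))
          * μ (closedBall y (2 ^ (j + 1) * d)) := by
        rw [lintegral_tsum fun j =>
          (measurable_const.indicator measurableSet_closedBall).aemeasurable]
        simp only [lintegral_indicator_const measurableSet_closedBall]
    _ ≤ ∑' j : ℕ, ENNReal.ofReal (((2 : ℝ) ^ j * d) ^ (-K))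
          * (c * ENNReal.ofReal ((2 : ℝ) ^ (j + 1) * d) ^ s) :=
        ENNReal.tsum_le_tsum fun j => by gcongr; exact hball _ (by positivity)
    _ = ∑' j : ℕ, c * ENNReal.ofReal (2 ^ s) * ENNReal.ofReal (d ^ (s - K))
          * ENNReal.ofReal (2 ^ (s - K)) ^ j := by
        congr 1 with j
        rw [ENNReal.ofReal_rpow_of_pos (by positivity), mul_left_comm,
          ← ENNReal.ofReal_mul (by positivity), dyadic_rpow_mul_rpow_eq s K hd,
          ENNReal.ofReal_mul (by positivity), ENNReal.ofReal_mul (by positivity),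
          ENNReal.ofReal_pow (by positivity)]
        ring
    _ = _ := by rw [ENNReal.tsum_mul_left, ENNReal.tsum_geometric]; ring

end Dyadic

section Scaling

open scoped Pointwise

variable {F : Type*} [NormedAddCommGroup F] [NormedSpace ℝ F] [MeasurableSpace F] [BorelSpace F]

theorem hausdorffMeasure_closedBall_zero {d : ℝ} (hd : 0 ≤ d) {r : ℝ} (hr : 0 < r) :
    μH[d] (closedBall (0 : F) r) = ENNReal.ofReal r ^ d * μH[d] (closedBall (0 : F) 1) := by
  have hball : closedBall (0 : F) r = r • closedBall (0 : F) 1 := by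
    rw [smul_unitClosedBall, Real.norm_of_nonneg hr.le]
  rw [hball, Measure.hausdorffMeasure_smul₀ hd hr.ne', ENNReal.smul_def, smul_eq_mul,
    ENNReal.coe_rpow_of_nonneg _ hd, Real.nnnorm_of_nonneg hr.le, ← ENNReal.ofReal_eq_coe_nnreal]

end Scaling

section Subspace

variable {F : Type*} [NormedAddCommGroup F] [InnerProductSpace ℝ F] [MeasurableSpace F]
  [BorelSpace F]

theorem hausdorffMeasure_submodule_inter_closedBall {k : ℕ} (H : Submodule ℝ F)
    [FiniteDimensional ℝ H] (hH : Module.finrank ℝ H = k) {r : ℝ} (hr : 0 < r) :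
    μH[k] ((H : Set F) ∩ closedBall 0 r)
      = ENNReal.ofReal r ^ (k : ℝ) * μH[k] (closedBall (0 : EuclideanSpace ℝ (Fin k)) 1) := by
  let φ : EuclideanSpace ℝ (Fin k) →ₗᵢ[ℝ] F :=
    H.subtypeₗᵢ.comp ((stdOrthonormalBasis ℝ H).reindex (finCongr hH)).repr.symm.toLinearIsometry
  have himage : (H : Set F) ∩ closedBall 0 r = φ '' closedBall 0 r := by
    ext x
    constructor
    · rintro ⟨hxH, hxr⟩
      refine ⟨((stdOrthonormalBasis ℝ H).reindex (finCongr hH)).repr ⟨x, hxH⟩, ?_, ?_⟩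
      · simpa using hxr
      · simp [φ]
    · rintro ⟨u, hu, rfl⟩
      refine ⟨SetLike.coe_mem _, ?_⟩
      rw [mem_closedBall_zero_iff] at hu ⊢
      exact (φ.norm_map u).trans_le hu
  rw [himage, φ.isometry.hausdorffMeasure_image (Or.inl k.cast_nonneg),
    hausdorffMeasure_closedBall_zero k.cast_nonneg hr]

end Subspace

theorem abs_sqrt_one_sub_sq_sub_le_s15 {a b : ℝ} (ha0 : 0 ≤ a) (ha : a ≤ 1 / 2) (hb0 : 0 ≤ b)
    (hb : b ≤ 1 / 2) : |√(1 - a ^ 2) - √(1 - b ^ 2)| ≤ |a - b| := by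
  have hsa : √(1 - a ^ 2) ^ 2 = 1 - a ^ 2 := Real.sq_sqrt (by nlinarith)
  have hsb : √(1 - b ^ 2) ^ 2 = 1 - b ^ 2 := Real.sq_sqrt (by nlinarith)
  have hsa2 : 1 / 2 ≤ √(1 - a ^ 2) := Real.le_sqrt_of_sq_le (by nlinarith)
  have hsb2 : 1 / 2 ≤ √(1 - b ^ 2) := Real.le_sqrt_of_sq_le (by nlinarith)
  -- `(√A - √B)(√A + √B) = (b - a)(b + a)` and `a + b ≤ 1 ≤ √A + √B`
  rw [abs_le]
  constructor <;> rcases abs_cases (a - b) with ⟨h, _⟩ | ⟨h, _⟩ <;> nlinarith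

section Sphere

variable {F : Type*} [NormedAddCommGroup F] [InnerProductSpace ℝ F]

/-- Near the unit vector `p`, the unit sphere is the graph of `v ↦ √(1 - ‖v‖ ^ 2)` over `pᗮ`. -/
noncomputable def sphereGraph (p v : F) : F := √(1 - ‖v‖ ^ 2) • p + v

theorem sphere_inter_closedBall_subset_image_sphereGraph {p : F} (hp : ‖p‖ = 1) {r : ℝ}
    (hr : r ≤ 1) :
    sphere (0 : F) 1 ∩ closedBall p r ⊆
      sphereGraph p '' (((ℝ ∙ p)ᗮ : Submodule ℝ F) ∩ closedBall 0 r) := by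
  rintro x ⟨hx, hxp⟩
  rw [mem_sphere_zero_iff_norm] at hx
  rw [mem_closedBall, dist_eq_norm] at hxp
  set t := ⟪p, x⟫
  have hpp : ⟪p, p⟫ = 1 := by rw [real_inner_self_eq_norm_sq, hp, one_pow]
  have hdist : ‖x - p‖ ^ 2 = 2 - 2 * t := by
    rw [norm_sub_sq_real, hx, hp, real_inner_comm]; ring
  have hv : ‖x - t • p‖ ^ 2 = 1 - t ^ 2 := by
    rw [norm_sub_sq_real, hx, inner_smul_right, norm_smul, hp, Real.norm_eq_abs, real_inner_comm]
    rw [mul_one, sq_abs]; ring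
  have ht0 : 0 ≤ t := by nlinarith [norm_nonneg (x - p)]
  have ht1 : t ≤ 1 := by nlinarith
  refine ⟨x - t • p, ⟨?_, ?_⟩, ?_⟩
  · rw [SetLike.mem_coe, Submodule.mem_orthogonal_singleton_iff_inner_right, inner_sub_right,
      inner_smul_right, hpp, mul_one, sub_self]
  · rw [mem_closedBall_zero_iff]
    -- `‖x - t p‖² = (1 - t)(1 + t) ≤ 2(1 - t) = ‖x - p‖²`
    nlinarith [norm_nonneg (x - t • p), norm_nonneg (x - p)]
  · rw [sphereGraph, hv, sub_sub_cancel, Real.sqrt_sq ht0, add_sub_cancel]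

theorem lipschitzOnWith_sphereGraph {p : F} (hp : ‖p‖ = 1) :
    LipschitzOnWith 2 (sphereGraph p) (((ℝ ∙ p)ᗮ : Submodule ℝ F) ∩ closedBall 0 (1 / 2)) := by
  refine LipschitzOnWith.of_dist_le_mul fun v ⟨hvp, hv⟩ w ⟨hwp, hw⟩ => ?_
  rw [SetLike.mem_coe, Submodule.mem_orthogonal_singleton_iff_inner_right] at hvp hwp
  rw [mem_closedBall_zero_iff] at hv hw
  set c := √(1 - ‖v‖ ^ 2) - √(1 - ‖w‖ ^ 2)
  have hdiff : sphereGraph p v - sphereGraph p w = c • p + (v - w) := by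
    simp only [sphereGraph, c, sub_smul]; abel
  have hpyth : ‖c • p + (v - w)‖ * ‖c • p + (v - w)‖ = c ^ 2 + ‖v - w‖ * ‖v - w‖ := by
    rw [norm_add_sq_eq_norm_sq_add_norm_sq_real (by rw [inner_smul_left, inner_sub_right, hvp,
      hwp, sub_zero, mul_zero]), norm_smul, hp, mul_one, Real.norm_eq_abs, ← sq, sq_abs]
  have hc : |c| ≤ ‖v - w‖ :=
    (abs_sqrt_one_sub_sq_sub_le_s15 (norm_nonneg v) hv (norm_nonneg w) hw).trans
      (abs_norm_sub_norm_le v w)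
  rw [dist_eq_norm, dist_eq_norm, hdiff, NNReal.coe_ofNat]
  nlinarith [norm_nonneg (c • p + (v - w)), norm_nonneg (v - w), sq_abs c, abs_nonneg c]

end Sphere

theorem hausdorffMeasure_closedBall_euclideanSpace_lt_top (k : ℕ) :
    μH[k] (closedBall (0 : EuclideanSpace ℝ (Fin k)) 1) < ∞ := by
  simpa only [finrank_euclideanSpace_fin] using
    (isCompact_closedBall (0 : EuclideanSpace ℝ (Fin k)) 1).measure_lt_top
      (μ := μH[(Module.finrank ℝ (EuclideanSpace ℝ (Fin k)) : ℝ)])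

section SphereMeasure

variable {F : Type*} [NormedAddCommGroup F] [InnerProductSpace ℝ F] [MeasurableSpace F]
  [BorelSpace F] {k : ℕ}

theorem hausdorffMeasure_sphere_inter_closedBall_le_of_norm_eq_one
    (hF : Module.finrank ℝ F = k + 1) {p : F} (hp : ‖p‖ = 1) {r : ℝ} (hr0 : 0 < r)
    (hr : r ≤ 1 / 2) :
    μH[k] (sphere (0 : F) 1 ∩ closedBall p r)
      ≤ 2 ^ (k : ℝ) * μH[k] (closedBall (0 : EuclideanSpace ℝ (Fin k)) 1)
          * ENNReal.ofReal r ^ (k : ℝ) := by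
  have : Fact (Module.finrank ℝ F = k + 1) := ⟨hF⟩
  have : FiniteDimensional ℝ F := .of_fact_finrank_eq_succ k
  set H : Submodule ℝ F := (ℝ ∙ p)ᗮ
  have hH : Module.finrank ℝ H = k :=
    Submodule.finrank_orthogonal_span_singleton (norm_ne_zero_iff.mp (by simp [hp]))
  have hlip : LipschitzOnWith 2 (sphereGraph p) ((H : Set F) ∩ closedBall 0 r) :=
    (lipschitzOnWith_sphereGraph hp).mono
      (inter_subset_inter_right _ (closedBall_subset_closedBall hr))
  calc μH[k] (sphere (0 : F) 1 ∩ closedBall p r)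
      ≤ μH[k] (sphereGraph p '' ((H : Set F) ∩ closedBall 0 r)) :=
        measure_mono (sphere_inter_closedBall_subset_image_sphereGraph hp (by linarith))
    _ ≤ ((2 : ℝ≥0) : ℝ≥0∞) ^ (k : ℝ) * μH[k] ((H : Set F) ∩ closedBall 0 r) :=
        hlip.hausdorffMeasure_image_le k.cast_nonneg
    _ = _ := by
        rw [hausdorffMeasure_submodule_inter_closedBall H hH hr0, ENNReal.coe_ofNat]
        ring

theorem hausdorffMeasure_sphere_lt_top (hF : Module.finrank ℝ F = k + 1) :
    μH[k] (sphere (0 : F) 1) < ∞ := by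
  have : Fact (Module.finrank ℝ F = k + 1) := ⟨hF⟩
  have : FiniteDimensional ℝ F := .of_fact_finrank_eq_succ k
  refine (isCompact_sphere 0 1).measure_lt_top_of_nhdsWithin fun p hp => ?_
  refine ⟨sphere 0 1 ∩ closedBall p (1 / 2),
    inter_mem_nhdsWithin _ (closedBall_mem_nhds p (by norm_num)), ?_⟩
  refine (hausdorffMeasure_sphere_inter_closedBall_le_of_norm_eq_one hF
    (mem_sphere_zero_iff_norm.mp hp) (by norm_num) le_rfl).trans_lt ?_
  have hk := k.cast_nonneg (α := ℝ)
  exact ENNReal.mul_lt_top (ENNReal.mul_lt_top (ENNReal.rpow_lt_top_of_nonneg hk (by simp))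
    (hausdorffMeasure_closedBall_euclideanSpace_lt_top k))
    (ENNReal.rpow_lt_top_of_nonneg hk ENNReal.ofReal_ne_top)

theorem exists_hausdorffMeasure_sphere_inter_closedBall_le_s15 (hF : Module.finrank ℝ F = k + 1) :
    ∃ c : ℝ≥0∞, c ≠ ∞ ∧ ∀ (z : F) (r : ℝ), 0 < r →
      μH[k] (sphere (0 : F) 1 ∩ closedBall z r) ≤ c * ENNReal.ofReal r ^ (k : ℝ) := by
  have hk := k.cast_nonneg (α := ℝ)
  set c₀ := 2 ^ (k : ℝ) * μH[k] (closedBall (0 : EuclideanSpace ℝ (Fin k)) 1)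
  set M := μH[k] (sphere (0 : F) 1)
  have hc₀ : c₀ ≠ ∞ := (ENNReal.mul_lt_top (ENNReal.rpow_lt_top_of_nonneg hk (by simp))
    (hausdorffMeasure_closedBall_euclideanSpace_lt_top k)).ne
  have hpow : ∀ a : ℝ, ENNReal.ofReal a ^ (k : ℝ) ≠ ∞ := fun a =>
    (ENNReal.rpow_lt_top_of_nonneg hk ENNReal.ofReal_ne_top).ne
  refine ⟨c₀ * ENNReal.ofReal 2 ^ (k : ℝ) + M * ENNReal.ofReal 4 ^ (k : ℝ),
    ENNReal.add_ne_top.mpr ⟨ENNReal.mul_ne_top hc₀ (hpow 2),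
      ENNReal.mul_ne_top (hausdorffMeasure_sphere_lt_top hF).ne (hpow 4)⟩, fun z r hr => ?_⟩
  rw [add_mul]
  rcases lt_or_ge r (1 / 4) with hr4 | hr4
  · refine le_add_right ?_
    rcases (sphere (0 : F) 1 ∩ closedBall z r).eq_empty_or_nonempty with hempty | ⟨p, hp, hpz⟩
    · simp [hempty]
    have hsub : sphere (0 : F) 1 ∩ closedBall z r ⊆ sphere 0 1 ∩ closedBall p (2 * r) :=
      inter_subset_inter_right _ fun x hx => by
        rw [mem_closedBall] at hx hpz ⊢
        linarith [dist_triangle_right x p z]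
    calc μH[k] (sphere (0 : F) 1 ∩ closedBall z r)
        ≤ c₀ * ENNReal.ofReal (2 * r) ^ (k : ℝ) :=
          (measure_mono hsub).trans (hausdorffMeasure_sphere_inter_closedBall_le_of_norm_eq_one
            hF (mem_sphere_zero_iff_norm.mp hp) (by positivity) (by linarith))
      _ = c₀ * ENNReal.ofReal 2 ^ (k : ℝ) * ENNReal.ofReal r ^ (k : ℝ) := by
          rw [ENNReal.ofReal_mul zero_le_two, ENNReal.mul_rpow_of_nonneg _ _ hk, mul_assoc c₀]
  · refine le_add_left ?_
    have h4r : 1 ≤ ENNReal.ofReal 4 ^ (k : ℝ) * ENNReal.ofReal r ^ (k : ℝ) := by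
      rw [← ENNReal.mul_rpow_of_nonneg _ _ hk, ← ENNReal.ofReal_mul (by norm_num)]
      have h1 : (1 : ℝ≥0∞) ≤ ENNReal.ofReal (4 * r) := by
        rw [← ENNReal.ofReal_one]; exact ENNReal.ofReal_le_ofReal (by linarith)
      simpa using ENNReal.rpow_le_rpow h1 hk
    calc μH[k] (sphere (0 : F) 1 ∩ closedBall z r) ≤ M := measure_mono inter_subset_left
      _ ≤ M * (ENNReal.ofReal 4 ^ (k : ℝ) * ENNReal.ofReal r ^ (k : ℝ)) :=
        le_mul_of_one_le_right' h4r
      _ = _ := (mul_assoc _ _ _).symm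

theorem exists_lintegral_sphere_norm_sub_rpow_neg_le (hF : Module.finrank ℝ F = k + 1) {K : ℝ}
    (hkK : (k : ℝ) < K) :
    ∃ A : ℝ≥0∞, A ≠ ∞ ∧ ∀ y : F, ‖y‖ < 1 →
      ∫⁻ x in sphere 0 1, ENNReal.ofReal (‖x - y‖ ^ (-K)) ∂μH[k]
        ≤ A * ENNReal.ofReal ((1 - ‖y‖) ^ ((k : ℝ) - K)) := by
  obtain ⟨c, hc, hcap⟩ := exists_hausdorffMeasure_sphere_inter_closedBall_le_s15 hF
  have hq : ENNReal.ofReal (2 ^ ((k : ℝ) - K)) < 1 := ENNReal.ofReal_lt_one.mpr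
    (Real.rpow_lt_one_of_one_lt_of_neg one_lt_two (by linarith))
  refine ⟨c * ENNReal.ofReal (2 ^ (k : ℝ)) * (1 - ENNReal.ofReal (2 ^ ((k : ℝ) - K)))⁻¹,
    ENNReal.mul_ne_top (ENNReal.mul_ne_top hc ENNReal.ofReal_ne_top)
      (ENNReal.inv_ne_top.mpr (tsub_pos_of_lt hq).ne'), fun y hy => ?_⟩
  have hfar : ∀ᵐ x ∂μH[k].restrict (sphere 0 1), 1 - ‖y‖ ≤ dist x y :=
    (ae_restrict_mem isClosed_sphere.measurableSet).mono fun x hx => by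
      rw [dist_eq_norm, ← mem_sphere_zero_iff_norm.mp hx]
      exact norm_sub_norm_le x y
  have hball (r : ℝ) (hr : 0 < r) :
      μH[k].restrict (sphere 0 1) (closedBall y r) ≤ c * ENNReal.ofReal r ^ (k : ℝ) := by
    rw [Measure.restrict_apply measurableSet_closedBall, inter_comm]
    exact hcap y r hr
  simpa only [dist_eq_norm] using
    lintegral_ofReal_dist_rpow_neg_le (by linarith) (by linarith) hball hfar

end SphereMeasure

theorem stmt15 (n : ℕ) (hn : 2 ≤ n) (γ K : ℝ) (hγ : 0 ≤ γ) (hK : γ + (n : ℝ) - 1 < K) :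
    ∃ C : ℝ, 0 < C ∧ ∀ y : EuclideanSpace ℝ (Fin n), ‖y‖ < 1 →
      ∫ x' in Metric.sphere (0 : EuclideanSpace ℝ (Fin n)) 1, ‖x' - y‖ ^ (-K) ∂μH[(n : ℝ) - 1]
        ≤ C * (1 - ‖y‖) ^ (-K + (n : ℝ) - 1) := by
  obtain ⟨k, rfl⟩ : ∃ k, n = k + 1 := Nat.exists_eq_add_of_le' (by omega)
  have hdim : ((k + 1 : ℕ) : ℝ) - 1 = k := by push_cast; ring
  obtain ⟨A, hA, hbound⟩ := exists_lintegral_sphere_norm_sub_rpow_neg_le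
    (finrank_euclideanSpace_fin (n := k + 1)) (K := K) (by push_cast at hK; linarith)
  refine ⟨A.toReal + 1, by positivity, fun y hy => ?_⟩
  rw [hdim, show -K + ((k + 1 : ℕ) : ℝ) - 1 = k - K by push_cast; ring]
  have hmeas : Measurable fun x : EuclideanSpace ℝ (Fin (k + 1)) => ‖x - y‖ ^ (-K) := by
    fun_prop
  rw [integral_eq_lintegral_of_nonneg_ae (ae_of_all _ fun _ => by positivity)
    hmeas.aestronglyMeasurable]
  refine ENNReal.toReal_le_of_le_ofReal (by positivity) ((hbound y hy).trans ?_)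
  rw [ENNReal.ofReal_mul (by positivity)]
  gcongr
  exact (ENNReal.le_ofReal_iff_toReal_le hA (by positivity)).mpr (by linarith)
end
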